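/- arXiv:1902.10142 — 8 statements merged into one kernel-verified Lean document; each statement's English description precedes it below -/
import Mathlib

section
/- If p ≠ q, then there exists an integer M ≥ 1 such that the stochastic rank statistic R computed with m = M resampled points is not uniformly distributed on {0,1,…,M}. -/
open MeasureTheory ProbabilityTheory
open scoped ENNReal

noncomputable section

/-- The uniform distribution on the interval `[0,1]`. -/
def unifIcc : Measure ℝ := volume.restrict (Set.Icc 0 1)

/-- The setup of the stochastic rank statistic: on a common probability space `(Ω, μ)`,
`X 0` has distribution `q`, the `X i` for `i ≠ 0` have distribution `p`, the `U i` are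
uniform on `[0,1]`, and all of `X 0, …, X m, U 0, …, U m` are mutually independent.
(Mutual independence of the `2(m+1)` variables is recorded by independence of the pairs
`(X i, U i)` together with each pair having the product law.) -/
def IsRankSetup {T : Type} [MeasurableSpace T] {Ω : Type} [MeasurableSpace Ω]
    (μ : Measure Ω) (p q : Measure T) (m : ℕ)
    (X : Fin (m + 1) → Ω → T) (U : Fin (m + 1) → Ω → ℝ) : Prop :=
  (∀ i, Measurable (X i)) ∧ (∀ i, Measurable (U i)) ∧
  iIndepFun (fun i ω => (X i ω, U i ω)) μ ∧
  μ.map (fun ω => (X 0 ω, U 0 ω)) = q.prod unifIcc ∧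
  ∀ i : Fin (m + 1), i ≠ 0 → μ.map (fun ω => (X i ω, U i ω)) = p.prod unifIcc

open scoped Classical in
/-- The stochastic rank statistic
`R = ∑_{j=1}^m (1[X j ≺ X 0] + 1[X j = X 0 ∧ U j < U 0])`. -/
def rankStat {T : Type} {Ω : Type} (r : T → T → Prop) (m : ℕ)
    (X : Fin (m + 1) → Ω → T) (U : Fin (m + 1) → Ω → ℝ) (ω : Ω) : ℕ :=
  ∑ j : Fin m, ((if r (X j.succ ω) (X 0 ω) then 1 else 0) +
    (if X j.succ ω = X 0 ω ∧ U j.succ ω < U 0 ω then 1 else 0))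

/-!
Only the event `R = M` is needed. Writing `F w` for the probability that a `p ⊗ U[0,1]`-point lies
lexicographically below `w`, independence gives `P(R = M) = ∫ F ^ M d(q ⊗ U[0,1])`. If this were
`1 / (M + 1)` for every `M`, the law of `F` under `q ⊗ U[0,1]` would have the moments of
`U[0,1]`, hence be `U[0,1]` (moments determine measures on a compact interval). On the fibre
`{t} × ℝ` the function `F` takes values in an interval of length `p t`, so `q t ≤ p t` for
every `t`, which forces `p = q`.
-/

open Set Polynomial

section MomentDeterminacy

variable {μ ν : Measure ℝ} {a b : ℝ}

lemma Continuous.integrable_of_ae_mem_Icc [IsFiniteMeasure μ] (hμ : ∀ᵐ x ∂μ, x ∈ Icc a b)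
    {f : ℝ → ℝ} (hf : Continuous f) : Integrable f μ := by
  rw [← Measure.restrict_eq_self_of_ae_mem hμ]
  exact hf.continuousOn.integrableOn_compact isCompact_Icc

lemma integral_eval_eq_of_integral_pow_eq [IsFiniteMeasure μ] [IsFiniteMeasure ν]
    (hμ : ∀ᵐ x ∂μ, x ∈ Icc a b) (hν : ∀ᵐ x ∂ν, x ∈ Icc a b)
    (h : ∀ n : ℕ, ∫ x, x ^ n ∂μ = ∫ x, x ^ n ∂ν) (P : ℝ[X]) :
    ∫ x, P.eval x ∂μ = ∫ x, P.eval x ∂ν := by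
  have expand (ρ : Measure ℝ) [IsFiniteMeasure ρ] (hρ : ∀ᵐ x ∂ρ, x ∈ Icc a b) :
      ∫ x, P.eval x ∂ρ = ∑ i ∈ Finset.range (P.natDegree + 1), P.coeff i * ∫ x, x ^ i ∂ρ := by
    simp_rw [eval_eq_sum_range, ← integral_const_mul]
    exact integral_finsetSum _ fun i _ =>
      ((continuous_pow i).integrable_of_ae_mem_Icc hρ).const_mul _
  simp_rw [expand μ hμ, expand ν hν, h]

lemma dist_integral_le_of_forall_mem_Icc [IsProbabilityMeasure μ] (hμ : ∀ᵐ x ∂μ, x ∈ Icc a b)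
    {f g : ℝ → ℝ} (hf : Continuous f) (hg : Continuous g) {ε : ℝ}
    (hfg : ∀ x ∈ Icc a b, dist (f x) (g x) ≤ ε) :
    dist (∫ x, f x ∂μ) (∫ x, g x ∂μ) ≤ ε := by
  rw [dist_eq_norm, ← integral_sub (hf.integrable_of_ae_mem_Icc hμ)
    (hg.integrable_of_ae_mem_Icc hμ)]
  simpa using norm_integral_le_of_norm_le_const
    (hμ.mono fun x hx => (dist_eq_norm (f x) (g x)).symm.trans_le (hfg x hx))

theorem ext_of_integral_pow_eq_of_ae_mem_Icc [IsProbabilityMeasure μ] [IsProbabilityMeasure ν]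
    (hμ : ∀ᵐ x ∂μ, x ∈ Icc a b) (hν : ∀ᵐ x ∂ν, x ∈ Icc a b)
    (h : ∀ n : ℕ, ∫ x, x ^ n ∂μ = ∫ x, x ^ n ∂ν) : μ = ν := by
  refine ext_of_forall_integral_eq_of_IsFiniteMeasure fun f =>
    eq_of_forall_dist_le fun ε hε => ?_
  obtain ⟨P, hP⟩ := exists_polynomial_near_of_continuousOn a b f f.continuous.continuousOn
    (ε / 2) (half_pos hε)
  have hPf : ∀ x ∈ Icc a b, dist (P.eval x) (f x) ≤ ε / 2 := fun x hx => (hP x hx).le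
  calc dist (∫ x, f x ∂μ) (∫ x, f x ∂ν)
      ≤ dist (∫ x, f x ∂μ) (∫ x, P.eval x ∂μ) + dist (∫ x, P.eval x ∂ν) (∫ x, f x ∂ν) := by
        rw [integral_eval_eq_of_integral_pow_eq hμ hν h P]
        exact dist_triangle _ _ _
    _ ≤ ε / 2 + ε / 2 := by
        gcongr
        · exact dist_integral_le_of_forall_mem_Icc hμ f.continuous P.continuous
            fun x hx => dist_comm (P.eval x) (f x) ▸ hPf x hx
        · exact dist_integral_le_of_forall_mem_Icc hν P.continuous f.continuous hPf
    _ = ε := add_halves ε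

end MomentDeterminacy

instance : IsProbabilityMeasure unifIcc :=
  ⟨by simp [unifIcc]⟩

lemma ae_mem_Icc_unifIcc : ∀ᵐ x ∂unifIcc, x ∈ Icc (0 : ℝ) 1 :=
  ae_restrict_mem measurableSet_Icc

lemma integral_pow_unifIcc (n : ℕ) : ∫ x, x ^ n ∂unifIcc = ((n : ℝ) + 1)⁻¹ := by
  rw [unifIcc, integral_Icc_eq_integral_Ioc, ← intervalIntegral.integral_of_le zero_le_one,
    integral_pow]
  simp

lemma unifIcc_Icc_le (x y : ℝ) : unifIcc (Icc x y) ≤ ENNReal.ofReal (y - x) :=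
  (Measure.restrict_apply_le _ _).trans_eq Real.volume_Icc

section LexOrder

variable {T : Type} [MeasurableSpace T] {r : T → T → Prop}

lemma measure_prod_setOf_lex [Std.Irrefl r] [MeasurableSingletonClass T] (p : Measure T)
    (ν : Measure ℝ) [IsProbabilityMeasure ν] (w : T × ℝ) :
    (p.prod ν) {z | Prod.Lex r (· < ·) z w} = p {t | r t w.1} + p {w.1} * ν (Iio w.2) := by
  have hsplit : {z | Prod.Lex r (· < ·) z w} = {t | r t w.1} ×ˢ univ ∪ {w.1} ×ˢ Iio w.2 := by
    ext z
    simp [Prod.lex_def]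
  have hdisj : Disjoint ({t | r t w.1} ×ˢ (univ : Set ℝ)) ({w.1} ×ˢ Iio w.2) :=
    disjoint_left.2 fun z hz hz' => irrefl w.1 ((mem_singleton_iff.1 hz'.1) ▸ hz.1 : r w.1 w.1)
  rw [hsplit, measure_union hdisj ((measurableSet_singleton _).prod measurableSet_Iio),
    Measure.prod_prod, Measure.prod_prod, measure_univ, mul_one]

def lexCdf (r : T → T → Prop) (ν : Measure (T × ℝ)) (w : T × ℝ) : ℝ :=
  ν.real {z | Prod.Lex r (· < ·) z w}

lemma lexCdf_prod_mem_Icc [Std.Irrefl r] [MeasurableSingletonClass T]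
    (p : Measure T) [IsProbabilityMeasure p] (ν : Measure ℝ) [IsProbabilityMeasure ν]
    (t : T) (u : ℝ) :
    lexCdf r (p.prod ν) (t, u) ∈
      Icc (p.real {s | r s t}) (p.real {s | r s t} + p.real {t}) := by
  have hu : ν.real (Iio u) ≤ 1 := measureReal_le_one
  rw [lexCdf, measureReal_def (p.prod ν), measure_prod_setOf_lex, ENNReal.toReal_add (by finiteness)
    (by finiteness), ENNReal.toReal_mul]
  simp only [← measureReal_def]
  constructor
  · exact le_add_of_nonneg_right (mul_nonneg measureReal_nonneg measureReal_nonneg)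
  · gcongr
    exact mul_le_of_le_one_right measureReal_nonneg hu

lemma measurableSet_setOf_lex [Countable T] [MeasurableSingletonClass T] :
    MeasurableSet {wz : (T × ℝ) × (T × ℝ) | Prod.Lex r (· < ·) wz.2 wz.1} := by
  simp only [Prod.lex_def]
  measurability

lemma measurable_measure_setOf_lex [Countable T] [MeasurableSingletonClass T]
    (ν : Measure (T × ℝ)) [SFinite ν] :
    Measurable fun w : T × ℝ => ν {z | Prod.Lex r (· < ·) z w} :=
  measurable_measure_prodMk_left measurableSet_setOf_lex

lemma measurable_lexCdf [Countable T] [MeasurableSingletonClass T] (ν : Measure (T × ℝ))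
    [SFinite ν] : Measurable (lexCdf r ν) :=
  (measurable_measure_setOf_lex ν).ennreal_toReal

end LexOrder

lemma measure_pi_setOf_forall_succ_mem {E : Type*} [MeasurableSpace E] {m : ℕ}
    (L : Fin (m + 1) → Measure E) [∀ i, SigmaFinite (L i)] {B : Set (E × E)}
    (hB : MeasurableSet B) :
    Measure.pi L {y | ∀ j : Fin m, (y 0, y j.succ) ∈ B} =
      ∫⁻ w, ∏ j : Fin m, L j.succ (Prod.mk w ⁻¹' B) ∂(L 0) := by
  set S : Set (E × (Fin m → E)) := {x | ∀ j, (x.1, x.2 j) ∈ B}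
  have hS : MeasurableSet S := by
    simp only [S, ofPred_forall]
    exact MeasurableSet.iInter fun j =>
      (measurable_fst.prodMk ((measurable_pi_apply j).comp measurable_snd)) hB
  have hpre : {y : Fin (m + 1) → E | ∀ j : Fin m, (y 0, y j.succ) ∈ B} =
      MeasurableEquiv.piFinSuccAbove (fun _ => E) 0 ⁻¹' S := by
    ext y
    simp [S, MeasurableEquiv.piFinSuccAbove_apply, Fin.insertNthEquiv, Fin.tail]
  rw [hpre, (measurePreserving_piFinSuccAbove L 0).measure_preimage hS.nullMeasurableSet,
    Measure.prod_apply hS]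
  refine lintegral_congr fun w => ?_
  have hsec : Prod.mk w ⁻¹' S = univ.pi fun _ => Prod.mk w ⁻¹' B := by
    ext z
    simp [S]
  simp [hsec, Measure.pi_pi]

lemma ProbabilityTheory.iIndepFun.measure_setOf_forall_succ_mem {Ω E : Type*}
    [MeasurableSpace Ω] [MeasurableSpace E] {μ : Measure Ω} [IsProbabilityMeasure μ] {m : ℕ}
    {Y : Fin (m + 1) → Ω → E} (hind : iIndepFun Y μ) (hY : ∀ i, Measurable (Y i))
    {B : Set (E × E)} (hB : MeasurableSet B) :
    μ {ω | ∀ j : Fin m, (Y 0 ω, Y j.succ ω) ∈ B} =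
      ∫⁻ w, ∏ j : Fin m, μ.map (Y j.succ) (Prod.mk w ⁻¹' B) ∂(μ.map (Y 0)) := by
  have hS : MeasurableSet {y : Fin (m + 1) → E | ∀ j : Fin m, (y 0, y j.succ) ∈ B} := by
    simp only [ofPred_forall]
    exact MeasurableSet.iInter fun j =>
      ((measurable_pi_apply 0).prodMk (measurable_pi_apply j.succ)) hB
  have := fun i => Measure.isProbabilityMeasure_map (μ := μ) (hY i).aemeasurable
  calc μ {ω | ∀ j : Fin m, (Y 0 ω, Y j.succ ω) ∈ B}
      = μ.map (fun ω i => Y i ω) {y | ∀ j : Fin m, (y 0, y j.succ) ∈ B} :=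
        (Measure.map_apply (measurable_pi_lambda _ hY) hS).symm
    _ = Measure.pi (fun i => μ.map (Y i)) {y | ∀ j : Fin m, (y 0, y j.succ) ∈ B} := by
        rw [(iIndepFun_iff_map_fun_eq_pi_map fun i => (hY i).aemeasurable).1 hind]
    _ = _ := measure_pi_setOf_forall_succ_mem _ hB

section RankStatistic

variable {T Ω : Type} {r : T → T → Prop} {m : ℕ} {X : Fin (m + 1) → Ω → T}
  {U : Fin (m + 1) → Ω → ℝ}

open scoped Classical in
lemma rankStat_eq_card_lex [Std.Irrefl r] (ω : Ω) :
    rankStat r m X U ω =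
      (Finset.univ.filter fun j : Fin m =>
        Prod.Lex r (· < ·) (X j.succ ω, U j.succ ω) (X 0 ω, U 0 ω)).card := by
  rw [rankStat, Finset.card_filter]
  refine Finset.sum_congr rfl fun j _ => ?_
  by_cases hr : r (X j.succ ω) (X 0 ω)
  · have hne : X j.succ ω ≠ X 0 ω := fun h => irrefl _ (h ▸ hr)
    simp [Prod.lex_def, hr, hne]
  · by_cases heq : X j.succ ω = X 0 ω ∧ U j.succ ω < U 0 ω <;> simp [Prod.lex_def, hr, heq, irrefl]

lemma setOf_rankStat_eq_self [Std.Irrefl r] :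
    {ω | rankStat r m X U ω = m} =
      {ω | ∀ j : Fin m, Prod.Lex r (· < ·) (X j.succ ω, U j.succ ω) (X 0 ω, U 0 ω)} := by
  classical
  ext ω
  simpa [rankStat_eq_card_lex] using Finset.card_filter_eq_iff (s := Finset.univ) (p := fun j =>
    Prod.Lex r (· < ·) (X (Fin.succ j) ω, U (Fin.succ j) ω) (X 0 ω, U 0 ω))

end RankStatistic

theorem IsRankSetup.measure_setOf_rankStat_eq_self {T Ω : Type} [Countable T] [MeasurableSpace T]
    [MeasurableSingletonClass T] {r : T → T → Prop} [Std.Irrefl r] [MeasurableSpace Ω]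
    {μ : Measure Ω} [IsProbabilityMeasure μ] {p q : Measure T} {m : ℕ}
    {X : Fin (m + 1) → Ω → T} {U : Fin (m + 1) → Ω → ℝ} (hs : IsRankSetup μ p q m X U) :
    μ {ω | rankStat r m X U ω = m} =
      ∫⁻ w, (p.prod unifIcc) {z | Prod.Lex r (· < ·) z w} ^ m ∂(q.prod unifIcc) := by
  obtain ⟨hX, hU, hind, hlaw₀, hlaw⟩ := hs
  rw [setOf_rankStat_eq_self]
  refine (iIndepFun.measure_setOf_forall_succ_mem hind (fun i => (hX i).prodMk (hU i))
    (measurableSet_setOf_lex (r := r))).trans ?_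
  simp_rw [hlaw₀, hlaw _ (Fin.succ_ne_zero _), Finset.prod_const, Finset.card_univ,
    Fintype.card_fin]
  rfl

section Recovery

variable {T : Type} [Countable T] [MeasurableSpace T] [MeasurableSingletonClass T]
  {r : T → T → Prop} {p q : Measure T} [IsProbabilityMeasure p]

theorem map_lexCdf_prod_eq_unifIcc [IsProbabilityMeasure q]
    (h : ∀ n : ℕ, 1 ≤ n → ∫⁻ w, (p.prod unifIcc) {z | Prod.Lex r (· < ·) z w} ^ n
      ∂(q.prod unifIcc) = ((n : ℝ≥0∞) + 1)⁻¹) :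
    (q.prod unifIcc).map (lexCdf r (p.prod unifIcc)) = unifIcc := by
  have hφ := measurable_lexCdf (r := r) (p.prod unifIcc)
  have := Measure.isProbabilityMeasure_map (μ := q.prod unifIcc) hφ.aemeasurable
  refine ext_of_integral_pow_eq_of_ae_mem_Icc ?_ ae_mem_Icc_unifIcc fun n => ?_
  · exact (ae_map_iff hφ.aemeasurable measurableSet_Icc).2
      (ae_of_all _ fun w => ⟨measureReal_nonneg, measureReal_le_one⟩)
  rw [integral_pow_unifIcc, integral_map hφ.aemeasurable (continuous_pow n).aestronglyMeasurable]
  rcases n.eq_zero_or_pos with rfl | hn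
  · simp
  simp only [lexCdf, measureReal_def, ← ENNReal.toReal_pow]
  rw [integral_toReal ((measurable_measure_setOf_lex _).pow_const n).aemeasurable
    (ae_of_all _ fun w => by finiteness), h n hn, ENNReal.toReal_inv]
  norm_cast

lemma measure_singleton_le_of_map_lexCdf_eq_unifIcc [Std.Irrefl r]
    (h : (q.prod unifIcc).map (lexCdf r (p.prod unifIcc)) = unifIcc) (t : T) :
    q {t} ≤ p {t} := by
  set a := p.real {s | r s t}
  have hφ := measurable_lexCdf (r := r) (p.prod unifIcc)
  calc q {t} = (q.prod unifIcc) ({t} ×ˢ univ) := by rw [Measure.prod_prod, measure_univ, mul_one]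
    _ ≤ (q.prod unifIcc) (lexCdf r (p.prod unifIcc) ⁻¹' Icc a (a + p.real {t})) := by
        refine measure_mono fun ⟨t', u⟩ hw => ?_
        obtain rfl : t' = t := hw.1
        exact lexCdf_prod_mem_Icc p unifIcc t' u
    _ = unifIcc (Icc a (a + p.real {t})) := by rw [← Measure.map_apply hφ measurableSet_Icc, h]
    _ ≤ ENNReal.ofReal (p.real {t}) := (unifIcc_Icc_le _ _).trans_eq (by rw [add_sub_cancel_left])
    _ = p {t} := ofReal_measureReal

end Recovery

lemma PMF.eq_of_forall_le {α : Type*} {p q : PMF α} (h : ∀ a, q a ≤ p a) : q = p := by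
  refine PMF.ext fun a => (h a).antisymm (not_lt.1 fun hlt => ?_)
  simpa using ENNReal.tsum_lt_tsum (q.tsum_coe ▸ ENNReal.one_ne_top) h hlt

theorem PMF.eq_of_lintegral_measure_prod_setOf_lex_pow {T : Type} [Countable T]
    [MeasurableSpace T] [MeasurableSingletonClass T] {r : T → T → Prop} [Std.Irrefl r]
    {p q : PMF T}
    (h : ∀ n : ℕ, 1 ≤ n → ∫⁻ w, (p.toMeasure.prod unifIcc) {z | Prod.Lex r (· < ·) z w} ^ n
      ∂(q.toMeasure.prod unifIcc) = ((n : ℝ≥0∞) + 1)⁻¹) :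
    p = q := by
  refine (PMF.eq_of_forall_le fun t => ?_).symm
  simpa [PMF.toMeasure_apply_singleton] using
    measure_singleton_le_of_map_lexCdf_eq_unifIcc (map_lexCdf_prod_eq_unifIcc h) t

theorem srs_exists_nonuniform_general
    {T : Type} [Countable T] [MeasurableSpace T] [MeasurableSingletonClass T]
    (r : T → T → Prop) (hr : IsStrictTotalOrder T r) (p q : PMF T) (hpq : p ≠ q) :
    ∃ M : ℕ, 1 ≤ M ∧
      ∀ (Ω : Type) (_ : MeasurableSpace Ω) (μ : Measure Ω), IsProbabilityMeasure μ →
        ∀ (X : Fin (M + 1) → Ω → T) (U : Fin (M + 1) → Ω → ℝ),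
          IsRankSetup μ p.toMeasure q.toMeasure M X U →
          ¬ (∀ k : ℕ, k ≤ M →
              μ {ω | rankStat r M X U ω = k} = ((M : ℝ≥0∞) + 1)⁻¹) := by
  by_contra! hunif
  refine hpq (PMF.eq_of_lintegral_measure_prod_setOf_lex_pow (r := r) fun n hn => ?_)
  obtain ⟨Ω, _, μ, _, X, U, hs, hR⟩ := hunif n hn
  rw [← hs.measure_setOf_rankStat_eq_self, hR n le_rfl]

/-- **Corollary (consistency).** If `p ≠ q`, then there is some `M ≥ 1` such that the
stochastic rank statistic computed with `m = M` resampled points is not uniformly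
distributed on `{0, 1, …, M}`. -/
theorem srs_exists_nonuniform
    {T : Type} [Countable T] [Nonempty T] [MeasurableSpace T] [MeasurableSingletonClass T]
    (r : T → T → Prop) (hr : IsStrictTotalOrder T r) (p q : PMF T) (hpq : p ≠ q) :
    ∃ M : ℕ, 1 ≤ M ∧
      ∀ (Ω : Type) (_ : MeasurableSpace Ω) (μ : Measure Ω), IsProbabilityMeasure μ →
        ∀ (X : Fin (M + 1) → Ω → T) (U : Fin (M + 1) → Ω → ℝ),
          IsRankSetup μ p.toMeasure q.toMeasure M X U →
          ¬ (∀ k : ℕ, k ≤ M →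
              μ {ω | rankStat r M X U ω = k} = ((M : ℝ≥0∞) + 1)⁻¹) :=
  srs_exists_nonuniform_general r hr p q hpq

end
end

section
/- Suppose p ≠ q and M ≥ 1 is an integer such that the stochastic rank statistic computed with m = M resampled points is not uniformly distributed on {0,1,…,M}. Then for every integer m ≥ M, the stochastic rank statistic computed with m resampled points is not uniformly distributed on {0,1,…,m}. -/
open MeasureTheory ProbabilityTheory
open scoped ENNReal

noncomputable section

/-!
Conditionally on `(X 0, U 0) = z`, the pairs `(X j, U j)`, `j ≥ 1`, are i.i.d. with law
`p ⊗ unif`, and `R` counts those lying lexicographically below `z`; hence `R` given `z` is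
binomial with parameters `m` and `G z := (p ⊗ unif) {w ≺ z}`, and `P(R = k)` is the
`q ⊗ unif`-average of the Bernstein weight `b_{m,k}(G z)`. Degree elevation
`(n + 1) b_{n,k} = (n + 1 - k) b_{n+1,k} + (k + 1) b_{n+1,k+1}` then shows that if `R` is
uniform for `n + 1` it is uniform for `n`, and the theorem is the contrapositive.
-/

open Finset

instance inst_s2 : IsProbabilityMeasure unifIcc := ⟨by simp [unifIcc, Real.volume_Icc]⟩

def bernsteinWeight (n k : ℕ) (x : ℝ≥0∞) : ℝ≥0∞ :=
  n.choose k * x ^ k * (1 - x) ^ (n - k)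

@[fun_prop]
lemma measurable_bernsteinWeight (n k : ℕ) : Measurable (bernsteinWeight n k) := by
  unfold bernsteinWeight; fun_prop

lemma succ_mul_bernsteinWeight {n k : ℕ} (hk : k ≤ n) {x : ℝ≥0∞} (hx : x ≤ 1) :
    (n + 1) * bernsteinWeight n k x
      = (n + 1 - k : ℕ) * bernsteinWeight (n + 1) k x
        + (k + 1 : ℕ) * bernsteinWeight (n + 1) (k + 1) x := by
  have hyx : (1 - x) + x = 1 := tsub_add_cancel_of_le hx
  have hc₁ : ((n + 1 - k : ℕ) : ℝ≥0∞) * (n + 1).choose k = (n + 1) * n.choose k := by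
    have h : (n + 1 - k) * (n + 1).choose k = (n + 1) * n.choose k := by
      rw [mul_comm, ← Nat.choose_mul_succ_eq, mul_comm]
    exact_mod_cast h
  have hc₂ : ((k + 1 : ℕ) : ℝ≥0∞) * (n + 1).choose (k + 1) = (n + 1) * n.choose k := by
    have h : (k + 1) * (n + 1).choose (k + 1) = (n + 1) * n.choose k := by
      rw [mul_comm, ← Nat.add_one_mul_choose_eq]
    exact_mod_cast h
  have hy : (1 - x) ^ (n + 1 - k) = (1 - x) ^ (n - k) * (1 - x) := by
    rw [Nat.sub_add_comm hk, pow_succ]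
  symm
  calc _ = (((n + 1 - k : ℕ) * (n + 1).choose k : ℝ≥0∞) * (1 - x)
          + ((k + 1 : ℕ) * (n + 1).choose (k + 1) : ℝ≥0∞) * x)
          * (x ^ k * (1 - x) ^ (n - k)) := by
        simp only [bernsteinWeight, hy, Nat.add_sub_add_right, pow_succ]; ring
    _ = (n + 1) * n.choose k * ((1 - x) + x) * (x ^ k * (1 - x) ^ (n - k)) := by
        rw [hc₁, hc₂, ← mul_add]
    _ = _ := by rw [hyx, bernsteinWeight]; ring

open scoped Classical in
lemma measure_pi_card_filter_mem {β : Type*} [MeasurableSpace β] (κ : Measure β)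
    [IsProbabilityMeasure κ] {A : Set β} (hA : MeasurableSet A) (m k : ℕ) :
    Measure.pi (fun _ : Fin m => κ) {w | #{j | w j ∈ A} = k} = bernsteinWeight m k (κ A) := by
  set F : (Fin m → β) → Finset (Fin m) := fun w => {j | w j ∈ A}
  have hfiber (S : Finset (Fin m)) :
      F ⁻¹' {S} = Set.univ.pi fun j => if j ∈ S then A else Aᶜ := by
    ext w
    simp only [F, Set.mem_preimage, Set.mem_singleton_iff, Finset.ext_iff, mem_filter, mem_univ,
      true_and, Set.mem_pi, Set.mem_univ, forall_const]
    refine forall_congr' fun j => ?_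
    split_ifs <;> simp [*]
  have hunion :
      {w : Fin m → β | #{j | w j ∈ A} = k} = ⋃ S ∈ powersetCard k univ, F ⁻¹' {S} := by
    ext w; simp [F]
  rw [hunion, measure_biUnion_finset ((Set.pairwiseDisjoint_fiber F _).subset fun _ h => h)
    fun S _ => by rw [hfiber]; exact .univ_pi fun j => by split_ifs; exacts [hA, hA.compl]]
  calc ∑ S ∈ powersetCard k univ, Measure.pi (fun _ => κ) (F ⁻¹' {S})
      = ∑ S ∈ powersetCard k (univ : Finset (Fin m)), κ A ^ k * (1 - κ A) ^ (m - k) := by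
        refine sum_congr rfl fun S hS => ?_
        rw [mem_powersetCard_univ] at hS
        simp only [hfiber, Measure.pi_pi, apply_ite κ, prob_compl_eq_one_sub hA, prod_ite,
          prod_const, filter_mem_eq_inter, univ_inter, filter_not, card_sdiff]
        simp [hS]
    _ = bernsteinWeight m k (κ A) := by
        rw [sum_const, card_powersetCard, card_univ, Fintype.card_fin, nsmul_eq_mul,
          bernsteinWeight, mul_assoc]

open scoped Classical in
lemma measurableSet_card_filter_eq {α : Type*} [MeasurableSpace α] {m : ℕ}
    {s : Fin m → Set α} (hs : ∀ j, MeasurableSet (s j)) (k : ℕ) :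
    MeasurableSet {x | #{j | x ∈ s j} = k} := by
  simp_rw [card_filter]
  exact (Finset.measurable_sum _ fun j _ => Measurable.ite (hs j) measurable_const measurable_const)
    (measurableSet_singleton k)

lemma lintegral_pi_cons {γ : Type*} [MeasurableSpace γ] {m : ℕ} (α β : Measure γ)
    [SigmaFinite α] [SigmaFinite β] {s : Set (γ × (Fin m → γ))} (hs : MeasurableSet s) :
    Measure.pi (Fin.cons α fun _ => β) {y : Fin (m + 1) → γ | (y 0, Fin.tail y) ∈ s}
      = ∫⁻ z, Measure.pi (fun _ => β) (Prod.mk z ⁻¹' s) ∂α := by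
  have : ∀ i, SigmaFinite ((Fin.cons α fun _ => β : Fin (m + 1) → Measure γ) i) :=
    Fin.cases (by simpa) fun _ => by simpa
  rw [← Measure.prod_apply hs]
  have h := (measurePreserving_piFinSuccAbove
    (Fin.cons α fun _ => β : Fin (m + 1) → Measure γ) 0).measure_preimage hs.nullMeasurableSet
  simp only [Fin.cons_zero, Fin.succAbove_zero, Fin.cons_succ] at h
  exact h

section Rank

variable {T : Type}

def lexBelow (r : T → T → Prop) (z : T × ℝ) : Set (T × ℝ) :=
  {w | r w.1 z.1 ∨ (w.1 = z.1 ∧ w.2 < z.2)}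

open scoped Classical in
lemma rankStat_eq_card (r : T → T → Prop) [Std.Irrefl r] {Ω : Type} {m : ℕ}
    (X : Fin (m + 1) → Ω → T) (U : Fin (m + 1) → Ω → ℝ) (ω : Ω) :
    rankStat r m X U ω
      = #{j : Fin m | (X j.succ ω, U j.succ ω) ∈ lexBelow r (X 0 ω, U 0 ω)} := by
  rw [rankStat, card_filter]
  refine sum_congr rfl fun j _ => ?_
  -- irreflexivity makes the two indicators in `rankStat` mutually exclusive
  by_cases h : r (X j.succ ω) (X 0 ω)
  · have : X j.succ ω ≠ X 0 ω := fun he => irrefl (X 0 ω) (he ▸ h)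
    simp [lexBelow, h, this]
  · simp [lexBelow, h]

variable [MeasurableSpace T]

lemma IsRankSetup.map_eq_pi {Ω : Type} [MeasurableSpace Ω] {μ : Measure Ω} {p q : Measure T}
    {m : ℕ} {X : Fin (m + 1) → Ω → T} {U : Fin (m + 1) → Ω → ℝ}
    (h : IsRankSetup μ p q m X U) :
    μ.map (fun ω i => (X i ω, U i ω))
      = Measure.pi (Fin.cons (q.prod unifIcc) fun _ => p.prod unifIcc) := by
  obtain ⟨hX, hU, hind, h₀, hsucc⟩ := h
  rw [hind.map_fun_eq_pi_map fun i => ((hX i).prodMk (hU i)).aemeasurable]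
  congr 1
  funext i
  induction i using Fin.cases with
  | zero => simpa using h₀
  | succ j => simpa using hsucc j.succ j.succ_ne_zero

def rankProb (r : T → T → Prop) (p q : Measure T) (m k : ℕ) : ℝ≥0∞ :=
  ∫⁻ z, bernsteinWeight m k ((p.prod unifIcc) (lexBelow r z)) ∂(q.prod unifIcc)

variable [Countable T] [MeasurableSingletonClass T]

lemma measurableSet_setOf_mem_lexBelow (r : T → T → Prop) :
    MeasurableSet {x : (T × ℝ) × (T × ℝ) | x.2 ∈ lexBelow r x.1} := by
  have hT : Measurable fun x : (T × ℝ) × (T × ℝ) => (x.2.1, x.1.1) := by fun_prop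
  exact (hT (t := {y | r y.1 y.2}) .of_discrete).union
    ((hT (t := {y | y.1 = y.2}) .of_discrete).inter
      (measurableSet_lt measurable_snd.snd measurable_fst.snd))

lemma measurableSet_lexBelow (r : T → T → Prop) (z : T × ℝ) : MeasurableSet (lexBelow r z) :=
  measurable_prodMk_left (measurableSet_setOf_mem_lexBelow r)

open scoped Classical in
lemma IsRankSetup.measure_rankStat_eq (r : T → T → Prop) [Std.Irrefl r] {Ω : Type}
    [MeasurableSpace Ω] {μ : Measure Ω} {p q : Measure T} [IsProbabilityMeasure p]
    [IsProbabilityMeasure q] {m : ℕ} {X : Fin (m + 1) → Ω → T}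
    {U : Fin (m + 1) → Ω → ℝ}
    (h : IsRankSetup μ p q m X U) (k : ℕ) :
    μ {ω | rankStat r m X U ω = k} = rankProb r p q m k := by
  set s : Set ((T × ℝ) × (Fin m → T × ℝ)) :=
    {x | #{j | x ∈ {x | x.2 j ∈ lexBelow r x.1}} = k}
  have hs : MeasurableSet s := measurableSet_card_filter_eq (fun j =>
    (measurable_fst.prodMk ((measurable_pi_apply j).comp measurable_snd))
      (measurableSet_setOf_mem_lexBelow r)) k
  have hY : Measurable fun ω i => (X i ω, U i ω) :=
    measurable_pi_lambda _ fun i => (h.1 i).prodMk (h.2.1 i)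
  calc μ {ω | rankStat r m X U ω = k}
      = μ.map (fun ω i => (X i ω, U i ω))
          {y : Fin (m + 1) → T × ℝ | (y 0, Fin.tail y) ∈ s} := by
        have hs' : MeasurableSet {y : Fin (m + 1) → T × ℝ | (y 0, Fin.tail y) ∈ s} :=
          ((measurable_pi_apply 0).prodMk
            (measurable_pi_lambda _ fun j => measurable_pi_apply j.succ)) hs
        rw [Measure.map_apply hY hs']
        simp_rw [rankStat_eq_card]
        rfl
    _ = rankProb r p q m k := by
        rw [h.map_eq_pi, lintegral_pi_cons _ _ hs]
        exact lintegral_congr fun z =>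
          measure_pi_card_filter_mem _ (measurableSet_lexBelow r z) m k

lemma rankProb_eq_inv_of_succ (r : T → T → Prop) (p q : Measure T) [IsProbabilityMeasure p]
    {n : ℕ}
    (h : ∀ k ≤ n + 1, rankProb r p q (n + 1) k = ((n + 1 : ℕ) + 1 : ℝ≥0∞)⁻¹) :
    ∀ k ≤ n, rankProb r p q n k = (n + 1 : ℝ≥0∞)⁻¹ := by
  intro k hk
  have hg : Measurable fun z => (p.prod unifIcc) (lexBelow r z) :=
    measurable_measure_prodMk_left (measurableSet_setOf_mem_lexBelow r)
  have hstep : (n + 1) * rankProb r p q n k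
      = (n + 1 - k : ℕ) * rankProb r p q (n + 1) k
        + (k + 1 : ℕ) * rankProb r p q (n + 1) (k + 1) := by
    simp only [rankProb]
    rw [← lintegral_const_mul _ (by fun_prop), ← lintegral_const_mul _ (by fun_prop),
      ← lintegral_const_mul _ (by fun_prop), ← lintegral_add_left (by fun_prop)]
    exact lintegral_congr fun z => succ_mul_bernsteinWeight hk prob_le_one
  have hsum : ((n + 1 - k : ℕ) + (k + 1 : ℕ) : ℝ≥0∞) = (n + 1 : ℕ) + 1 := by
    norm_cast; omega
  rw [h k (by omega), h (k + 1) (by omega), ← add_mul, hsum,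
    ENNReal.mul_inv_cancel (by positivity) (by simp)] at hstep
  exact ENNReal.eq_inv_of_mul_eq_one_left (by rw [mul_comm, hstep])

lemma rankProb_eq_inv_of_le (r : T → T → Prop) (p q : Measure T) [IsProbabilityMeasure p]
    {n m : ℕ} (hnm : n ≤ m) (h : ∀ k ≤ m, rankProb r p q m k = (m + 1 : ℝ≥0∞)⁻¹) :
    ∀ k ≤ n, rankProb r p q n k = (n + 1 : ℝ≥0∞)⁻¹ := by
  induction hnm using Nat.decreasingInduction with
  | self => exact h
  | of_succ n _ ih => exact rankProb_eq_inv_of_succ r p q ih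

end Rank

theorem srs_nonuniform_of_ge_general
    {T : Type} [Countable T] [MeasurableSpace T] [MeasurableSingletonClass T]
    (r : T → T → Prop) (hr : IsStrictTotalOrder T r) (p q : PMF T)
    (M : ℕ)
    (hwitness :
      ∃ (Ω : Type) (_ : MeasurableSpace Ω) (μ : Measure Ω) (_ : IsProbabilityMeasure μ)
        (X : Fin (M + 1) → Ω → T) (U : Fin (M + 1) → Ω → ℝ),
        IsRankSetup μ p.toMeasure q.toMeasure M X U ∧
        ¬ (∀ k : ℕ, k ≤ M →
            μ {ω | rankStat r M X U ω = k} = ((M : ℝ≥0∞) + 1)⁻¹)) :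
    ∀ m : ℕ, M ≤ m →
      ∀ (Ω : Type) (_ : MeasurableSpace Ω) (μ : Measure Ω), IsProbabilityMeasure μ →
        ∀ (X : Fin (m + 1) → Ω → T) (U : Fin (m + 1) → Ω → ℝ),
          IsRankSetup μ p.toMeasure q.toMeasure m X U →
          ¬ (∀ k : ℕ, k ≤ m →
              μ {ω | rankStat r m X U ω = k} = ((m : ℝ≥0∞) + 1)⁻¹) := by
  intro m hMm Ω _ μ _ X U hsetup huniform
  obtain ⟨Ω', _, μ', _, X', U', hsetup', hnonuniform⟩ := hwitness
  simp only [hsetup.measure_rankStat_eq r] at huniform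
  simp only [hsetup'.measure_rankStat_eq r] at hnonuniform
  exact hnonuniform (rankProb_eq_inv_of_le r _ _ hMm huniform)

/-- **Theorem (non-uniformity for all larger `m`).** Suppose `p ≠ q` and `M ≥ 1` is such
that the stochastic rank statistic computed with `m = M` resampled points is not uniformly
distributed on `{0, …, M}` (witnessed by some setup).  Then for every `m ≥ M`, the
stochastic rank statistic computed with `m` resampled points is not uniformly distributed
on `{0, …, m}`. -/
theorem srs_nonuniform_of_ge
    {T : Type} [Countable T] [Nonempty T] [MeasurableSpace T] [MeasurableSingletonClass T]
    (r : T → T → Prop) (hr : IsStrictTotalOrder T r) (p q : PMF T) (hpq : p ≠ q)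
    (M : ℕ) (hM : 1 ≤ M)
    (hwitness :
      ∃ (Ω : Type) (_ : MeasurableSpace Ω) (μ : Measure Ω) (_ : IsProbabilityMeasure μ)
        (X : Fin (M + 1) → Ω → T) (U : Fin (M + 1) → Ω → ℝ),
        IsRankSetup μ p.toMeasure q.toMeasure M X U ∧
        ¬ (∀ k : ℕ, k ≤ M →
            μ {ω | rankStat r M X U ω = k} = ((M : ℝ≥0∞) + 1)⁻¹)) :
    ∀ m : ℕ, M ≤ m →
      ∀ (Ω : Type) (_ : MeasurableSpace Ω) (μ : Measure Ω), IsProbabilityMeasure μ →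
        ∀ (X : Fin (m + 1) → Ω → T) (U : Fin (m + 1) → Ω → ℝ),
          IsRankSetup μ p.toMeasure q.toMeasure m X U →
          ¬ (∀ k : ℕ, k ≤ m →
              μ {ω | rankStat r m X U ω = k} = ((m : ℝ≥0∞) + 1)⁻¹) :=
  srs_nonuniform_of_ge_general r hr p q M hwitness
end
end

section
/- Let T₀, T₁, …, T_m be an i.i.d. sequence of random variables taking values in a linearly ordered measurable space, and suppose P(T_i = T_j) = 0 for all distinct indices i and j. Then for every i ∈ {0,…,m}, the rank statistic S_i := Σ_{j=0}^{m} 1[T_j < T_i] is uniformly distributed on {0,1,…,m}. -/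
/-!
An i.i.d. vector is exchangeable, so the events `{rank i = k}` all have the same probability as
`i` varies. Two of them meet only where there is a tie, and outside the null set of ties the
sample takes every rank in `{0, …, m}` exactly once; hence the `m + 1` probabilities sum to `1`.
-/

open MeasureTheory ProbabilityTheory Finset
open scoped ENNReal

namespace MeasureTheory.Measure

variable {ι β : Type*} [Fintype ι] [MeasurableSpace β]

theorem pi_map_comp_perm (ν : Measure β) [SigmaFinite ν] (σ : Equiv.Perm ι) :
    (Measure.pi fun _ : ι => ν).map (fun x => x ∘ σ) = Measure.pi fun _ => ν := by
  convert (measurePreserving_piCongrLeft (fun _ : ι => ν) σ.symm).map_eq using 2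
  ext x j
  simp [MeasurableEquiv.coe_piCongrLeft, Equiv.piCongrLeft_apply]

end MeasureTheory.Measure

namespace ProbabilityTheory

variable {ι β Ω : Type*} [MeasurableSpace Ω]

theorem ae_injective_of_null_ties [Countable ι] {μ : Measure Ω} {X : Ω → ι → β}
    (hties : ∀ a b, a ≠ b → μ {ω | X ω a = X ω b} = 0) :
    ∀ᵐ ω ∂μ, Function.Injective (X ω) := by
  simp only [Function.Injective, ae_all_iff]
  intro a b
  by_cases hab : a = b
  · exact ae_of_all _ fun _ _ => hab
  · filter_upwards [measure_eq_zero_iff_ae_notMem.1 (hties a b hab)] with ω hω h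
    exact absurd h hω

variable [MeasurableSpace β]

def Exchangeable (X : Ω → ι → β) (μ : Measure Ω) : Prop :=
  ∀ σ : Equiv.Perm ι, μ.map (fun ω => X ω ∘ σ) = μ.map X

theorem iIndepFun.exchangeable [Fintype ι] {μ : Measure Ω} {f : ι → Ω → β} {ν : Measure β}
    [SigmaFinite ν]
    (hmeas : ∀ i, Measurable (f i)) (hindep : iIndepFun f μ) (hident : ∀ i, μ.map (f i) = ν) :
    Exchangeable (fun ω i => f i ω) μ := by
  intro σ
  have hlaw : μ.map (fun ω i => f i ω) = Measure.pi fun _ => ν := by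
    rw [hindep.map_fun_eq_pi_map fun i => (hmeas i).aemeasurable]
    simp_rw [hident]
  change μ.map ((· ∘ σ) ∘ fun ω i => f i ω) = _
  rw [← Measure.map_map (by fun_prop) (measurable_pi_lambda _ hmeas), hlaw,
    Measure.pi_map_comp_perm]

end ProbabilityTheory

section Rank

variable {ι β : Type*} [Fintype ι] [LinearOrder β]

def rank (x : ι → β) (i : ι) : ℕ := #{j | x j < x i}

theorem rank_eq_sum (x : ι → β) (i : ι) :
    rank x i = ∑ j, if x j < x i then 1 else 0 :=
  card_filter _ _

theorem rank_lt_rank {x : ι → β} {a b : ι} (h : x a < x b) : rank x a < rank x b :=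
  card_lt_card <| (ssubset_iff_of_subset (monotone_filter_right _ fun _ _ hj => hj.trans h)).2
    ⟨a, by simpa using h, by simp⟩

theorem eq_of_rank_eq {x : ι → β} {a b : ι} (h : rank x a = rank x b) : x a = x b :=
  le_antisymm (not_lt.1 fun hba => (rank_lt_rank hba).ne' h)
    (not_lt.1 fun hab => (rank_lt_rank hab).ne h)

theorem rank_injective {x : ι → β} (hx : Function.Injective x) : Function.Injective (rank x) :=
  fun _ _ h => hx (eq_of_rank_eq h)

theorem rank_lt_card (x : ι → β) (i : ι) : rank x i < Fintype.card ι :=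
  card_lt_univ_of_notMem (x := i) (by simp)

theorem exists_rank_eq {x : ι → β} (hx : Function.Injective x) {k : ℕ}
    (hk : k < Fintype.card ι) : ∃ i, rank x i = k := by
  have himage : univ.image (rank x) = range (Fintype.card ι) :=
    eq_of_subset_of_card_le
      (fun _ h => by
        obtain ⟨i, -, rfl⟩ := mem_image.1 h
        exact mem_range.2 (rank_lt_card x i))
      (by rw [card_image_of_injective _ (rank_injective hx), card_range, card_univ])
  obtain ⟨i, -, hi⟩ := mem_image.1 (himage ▸ mem_range.2 hk : k ∈ univ.image (rank x))
  exact ⟨i, hi⟩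

theorem rank_comp_perm (x : ι → β) (σ : Equiv.Perm ι) (i : ι) :
    rank (x ∘ σ) i = rank x (σ i) := by
  simp only [rank_eq_sum, Function.comp_apply]
  exact Equiv.sum_comp σ fun j => if x j < x (σ i) then 1 else 0

variable [MeasurableSpace β]

theorem measurable_rank (hlt : MeasurableSet {z : β × β | z.1 < z.2}) (i : ι) :
    Measurable fun x : ι → β => rank x i := by
  simp_rw [rank_eq_sum]
  refine Finset.measurable_sum _ fun j _ => Measurable.ite ?_ measurable_const measurable_const
  exact (measurable_pi_apply j |>.prodMk (measurable_pi_apply i) :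
    Measurable fun x : ι → β => (x j, x i)) hlt

variable {Ω : Type*} [MeasurableSpace Ω] {μ : Measure Ω} {X : Ω → ι → β}

theorem ProbabilityTheory.Exchangeable.measure_rank_eq_eq (hX : Exchangeable X μ)
    (hXm : Measurable X) (hlt : MeasurableSet {z : β × β | z.1 < z.2}) (a b : ι) (k : ℕ) :
    μ {ω | rank (X ω) a = k} = μ {ω | rank (X ω) b = k} := by
  classical
  have hA : MeasurableSet {x : ι → β | rank x a = k} :=
    measurable_rank hlt a (measurableSet_singleton k)
  have hpre : {ω | rank (X ω) b = k} =
      (fun ω => X ω ∘ Equiv.swap a b) ⁻¹' {x | rank x a = k} := by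
    ext ω
    simp [rank_comp_perm]
  rw [hpre, ← Measure.map_apply (by fun_prop) hA, hX, Measure.map_apply hXm hA]
  rfl

theorem sum_measure_rank_eq [IsProbabilityMeasure μ] (hXm : Measurable X)
    (hlt : MeasurableSet {z : β × β | z.1 < z.2})
    (hties : ∀ a b, a ≠ b → μ {ω | X ω a = X ω b} = 0) {k : ℕ} (hk : k < Fintype.card ι) :
    ∑ a, μ {ω | rank (X ω) a = k} = 1 := by
  have hcover : μ (⋃ a, {ω | rank (X ω) a = k}) = 1 := by
    refine (measure_congr (ae_eq_univ.2 (mem_ae_iff.1 ?_))).trans measure_univ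
    filter_upwards [ae_injective_of_null_ties hties] with ω hω
    exact Set.mem_iUnion.2 (exists_rank_eq hω hk)
  rw [← hcover, measure_iUnion₀, tsum_fintype]
  · intro a b hab
    exact measure_mono_null (fun ω hω => eq_of_rank_eq (hω.1.trans hω.2.symm)) (hties a b hab)
  · exact fun a => ((measurable_rank hlt a).comp hXm (measurableSet_singleton k)).nullMeasurableSet

theorem ProbabilityTheory.Exchangeable.measure_rank_eq_inv_card [IsProbabilityMeasure μ]
    (hX : Exchangeable X μ) (hXm : Measurable X) (hlt : MeasurableSet {z : β × β | z.1 < z.2})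
    (hties : ∀ a b, a ≠ b → μ {ω | X ω a = X ω b} = 0) (i : ι) {k : ℕ}
    (hk : k < Fintype.card ι) :
    μ {ω | rank (X ω) i = k} = (Fintype.card ι : ℝ≥0∞)⁻¹ := by
  refine ENNReal.eq_inv_of_mul_eq_one_left ?_
  calc μ {ω | rank (X ω) i = k} * Fintype.card ι = ∑ a, μ {ω | rank (X ω) a = k} := by
        simp [hX.measure_rank_eq_eq hXm hlt _ i, mul_comm]
    _ = 1 := sum_measure_rank_eq hXm hlt hties hk

end Rank

/-- **Lemma (uniformity of rank statistics).** Let `T 0, T 1, …, T m` be an i.i.d. sequence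
of random variables taking values in a linearly ordered measurable space whose strict-order
relation is measurable, and suppose `P(T i = T j) = 0` for all distinct `i` and `j`.  Then
for every `i`, the rank statistic `S i = ∑_{j=0}^m 1[T j < T i]` is uniformly distributed
on `{0, 1, …, m}`. -/
theorem rank_of_iid_uniform
    {Ω β : Type} [MeasurableSpace Ω] [MeasurableSpace β] [LinearOrder β]
    (hlt : MeasurableSet {z : β × β | z.1 < z.2})
    (μ : Measure Ω) [IsProbabilityMeasure μ] (m : ℕ)
    (f : Fin (m + 1) → Ω → β)
    (hmeas : ∀ i, Measurable (f i))
    (hindep : iIndepFun f μ)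
    (hident : ∀ i j : Fin (m + 1), μ.map (f i) = μ.map (f j))
    (hdistinct : ∀ i j : Fin (m + 1), i ≠ j → μ {ω | f i ω = f j ω} = 0) :
    ∀ i : Fin (m + 1), ∀ k : ℕ, k ≤ m →
      μ {ω | (∑ j : Fin (m + 1), if f j ω < f i ω then 1 else 0) = k}
        = ((m : ℝ≥0∞) + 1)⁻¹ := by
  intro i k hk
  have hX := hindep.exchangeable hmeas fun j => hident j 0
  have huniform := hX.measure_rank_eq_inv_card (measurable_pi_lambda _ hmeas) hlt hdistinct i
    (k := k) (by simpa using Nat.lt_succ_of_le hk)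
  simpa [rank_eq_sum] using huniform
end

section
/- Let Z₁, …, Z_{m+1} be a finitely exchangeable sequence of {0,1}-valued (Bernoulli) random variables, i.e., the joint distribution of (Z₁,…,Z_{m+1}) is invariant under every permutation of the indices. If S_m := Σ_{i=1}^{m} Z_i is not uniformly distributed on {0,1,…,m}, then S_{m+1} := Σ_{i=1}^{m+1} Z_i is not uniformly distributed on {0,1,…,m+1}. -/
open MeasureTheory ProbabilityTheory
open scoped ENNReal

/-! Write `S = S_{m+1}`. By exchangeability `P(S = j, Z_i = 1)` does not depend on `i`, and
summing over `i` gives `(m+1) P(S = j, Z_{m+1} = 1) = j P(S = j)`. Splitting each event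
according to the value of `Z_{m+1}` then yields
`(m+1) P(S_m = k) + k P(S = k) = (m+1) P(S = k) + (k+1) P(S = k+1)`,
so if `S` is uniform on `{0, …, m+1}`, then `P(S_m = k) = 1/(m+1)` for every `k ≤ m`. -/

section

variable {Ω ι : Type*} [MeasurableSpace Ω] {μ : Measure Ω} [Fintype ι] {Z : ι → Ω → ℕ}

def IsExchangeable (μ : Measure Ω) (Z : ι → Ω → ℕ) : Prop :=
  ∀ σ : Equiv.Perm ι, μ.map (fun ω i => Z (σ i) ω) = μ.map (fun ω i => Z i ω)

lemma measure_sum_eq_inter_eq_one_congr [DecidableEq ι] (hmeas : ∀ i, Measurable (Z i))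
    (hexch : IsExchangeable μ Z) (j : ℕ) (i i' : ι) :
    μ ({ω | ∑ l, Z l ω = j} ∩ {ω | Z i ω = 1})
      = μ ({ω | ∑ l, Z l ω = j} ∩ {ω | Z i' ω = 1}) := by
  let σ := Equiv.swap i i'
  let C : Set (ι → ℕ) := {g | ∑ l, g l = j} ∩ {g | g i' = 1}
  have hC : MeasurableSet C := C.to_countable.measurableSet
  have h := congrArg (fun ν : Measure (ι → ℕ) => ν C) (hexch σ)
  rw [Measure.map_apply (measurable_pi_lambda _ fun l => hmeas (σ l)) hC,
    Measure.map_apply (measurable_pi_lambda _ hmeas) hC] at h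
  have hpre : (fun ω l => Z (σ l) ω) ⁻¹' C = {ω | ∑ l, Z l ω = j} ∩ {ω | Z i ω = 1} := by
    ext ω
    simp [C, σ, Fintype.sum_equiv σ (fun l => Z (σ l) ω) (fun l => Z l ω) fun _ => rfl]
  exact hpre ▸ h

lemma sum_measure_sum_eq_inter_eq_one (hmeas : ∀ i, Measurable (Z i))
    (hval : ∀ i ω, Z i ω = 0 ∨ Z i ω = 1) (j : ℕ) :
    ∑ i, μ ({ω | ∑ l, Z l ω = j} ∩ {ω | Z i ω = 1}) = j * μ {ω | ∑ l, Z l ω = j} := by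
  have hS : MeasurableSet {ω | ∑ l, Z l ω = j} :=
    (Finset.measurable_sum _ fun l _ => hmeas l) (measurableSet_singleton j)
  have hind : ∀ i, μ ({ω | ∑ l, Z l ω = j} ∩ {ω | Z i ω = 1})
      = ∫⁻ ω in {ω | ∑ l, Z l ω = j}, (Z i ω : ℝ≥0∞) ∂μ := by
    intro i
    have hB : MeasurableSet {ω | Z i ω = 1} := hmeas i (measurableSet_singleton 1)
    rw [Set.inter_comm, ← Measure.restrict_apply hB, ← lintegral_indicator_one hB]
    refine lintegral_congr fun ω => ?_
    rcases hval i ω with h | h <;> simp [h]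
  calc ∑ i, μ ({ω | ∑ l, Z l ω = j} ∩ {ω | Z i ω = 1})
      = ∫⁻ ω in {ω | ∑ l, Z l ω = j}, ((∑ l, Z l ω : ℕ) : ℝ≥0∞) ∂μ := by
        simp_rw [hind, Nat.cast_sum]
        exact (lintegral_finsetSum _ fun i _ => measurable_from_nat.comp (hmeas i)).symm
    _ = j * μ {ω | ∑ l, Z l ω = j} := by
        rw [setLIntegral_congr_fun hS fun ω (hω : _ = j) => by rw [hω], setLIntegral_const]

lemma measure_eq_inter_eq_zero_add_inter_eq_one {f : Ω → ℕ} (hf : Measurable f)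
    (hval : ∀ ω, f ω = 0 ∨ f ω = 1) (s : Set Ω) :
    μ s = μ (s ∩ {ω | f ω = 0}) + μ (s ∩ {ω | f ω = 1}) := by
  rw [← measure_inter_add_sdiff s (hf (measurableSet_singleton 1)), add_comm]
  congr 2
  ext ω
  rcases hval ω with h | h <;> simp [h]

lemma card_mul_measure_sum_eq_inter_eq_one [DecidableEq ι] (hmeas : ∀ i, Measurable (Z i))
    (hval : ∀ i ω, Z i ω = 0 ∨ Z i ω = 1) (hexch : IsExchangeable μ Z) (j : ℕ) (i : ι) :
    Fintype.card ι * μ ({ω | ∑ l, Z l ω = j} ∩ {ω | Z i ω = 1})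
      = j * μ {ω | ∑ l, Z l ω = j} := by
  rw [← sum_measure_sum_eq_inter_eq_one hmeas hval,
    Finset.sum_congr rfl fun i' _ => measure_sum_eq_inter_eq_one_congr hmeas hexch j i' i,
    Finset.sum_const, Finset.card_univ, nsmul_eq_mul]

end

lemma exchangeable_measure_sum_castSucc_eq {Ω : Type*} [MeasurableSpace Ω] {μ : Measure Ω}
    {m : ℕ} {Z : Fin (m + 1) → Ω → ℕ} (hmeas : ∀ i, Measurable (Z i))
    (hval : ∀ i ω, Z i ω = 0 ∨ Z i ω = 1) (hexch : IsExchangeable μ Z) (k : ℕ) :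
    (m + 1) * μ {ω | ∑ i : Fin m, Z i.castSucc ω = k} + k * μ {ω | ∑ i, Z i ω = k}
      = (m + 1) * μ {ω | ∑ i, Z i ω = k} + (k + 1) * μ {ω | ∑ i, Z i ω = k + 1} := by
  have hsplit := measure_eq_inter_eq_zero_add_inter_eq_one (μ := μ) (hmeas (Fin.last m)) (hval _)
  have hcount (j : ℕ) := card_mul_measure_sum_eq_inter_eq_one hmeas hval hexch j (Fin.last m)
  have hk1 := hcount (k + 1)
  simp only [Fintype.card_fin, Nat.cast_add, Nat.cast_one] at hcount hk1
  have hzero : {ω | ∑ i : Fin m, Z i.castSucc ω = k} ∩ {ω | Z (Fin.last m) ω = 0}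
      = {ω | ∑ i, Z i ω = k} ∩ {ω | Z (Fin.last m) ω = 0} := by
    ext ω
    simp only [Set.mem_inter_iff, Set.mem_ofPred_eq, Fin.sum_univ_castSucc]
    omega
  have hone : {ω | ∑ i : Fin m, Z i.castSucc ω = k} ∩ {ω | Z (Fin.last m) ω = 1}
      = {ω | ∑ i, Z i ω = k + 1} ∩ {ω | Z (Fin.last m) ω = 1} := by
    ext ω
    simp only [Set.mem_inter_iff, Set.mem_ofPred_eq, Fin.sum_univ_castSucc]
    omega
  rw [hsplit {ω | ∑ i : Fin m, Z i.castSucc ω = k}, hzero, hone, ← hcount k, ← hk1,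
    hsplit {ω | ∑ i, Z i ω = k}]
  ring

theorem exchangeable_bernoulli_sum_nonuniform_general
    {Ω : Type} [MeasurableSpace Ω] (μ : Measure Ω)
    (m : ℕ) (Z : Fin (m + 1) → Ω → ℕ)
    (hmeas : ∀ i, Measurable (Z i))
    (hval : ∀ i ω, Z i ω = 0 ∨ Z i ω = 1)
    (hexch : ∀ σ : Equiv.Perm (Fin (m + 1)),
      μ.map (fun ω => fun i => Z (σ i) ω) = μ.map (fun ω => fun i => Z i ω))
    (hnonunif : ¬ (∀ k : ℕ, k ≤ m →
      μ {ω | (∑ i : Fin m, Z i.castSucc ω) = k} = ((m : ℝ≥0∞) + 1)⁻¹)) :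
    ¬ (∀ k : ℕ, k ≤ m + 1 →
      μ {ω | (∑ i : Fin (m + 1), Z i ω) = k} = ((m : ℝ≥0∞) + 2)⁻¹) := by
  intro hunif
  refine hnonunif fun k hk => ?_
  have h := exchangeable_measure_sum_castSucc_eq hmeas hval hexch k
  rw [hunif k (by omega), hunif (k + 1) (by omega)] at h
  have hfin : (k : ℝ≥0∞) * ((m : ℝ≥0∞) + 2)⁻¹ ≠ ∞ := by finiteness
  have hrhs : ((m : ℝ≥0∞) + 1) * ((m : ℝ≥0∞) + 2)⁻¹ + (k + 1) * ((m : ℝ≥0∞) + 2)⁻¹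
      = ((m : ℝ≥0∞) + 2) * ((m : ℝ≥0∞) + 2)⁻¹ + k * ((m : ℝ≥0∞) + 2)⁻¹ := by ring
  rw [hrhs, ENNReal.mul_inv_cancel (by positivity) (by finiteness), ENNReal.add_left_inj hfin,
    mul_comm] at h
  exact ENNReal.eq_inv_of_mul_eq_one_left h

/-- **Lemma (exchangeable Bernoulli sums).** Let `Z 1, …, Z (m+1)` be a finitely
exchangeable sequence of `{0,1}`-valued random variables (the joint law is invariant under
every permutation of the indices).  If `S m = ∑_{i=1}^m Z i` is not uniformly distributed
on `{0, …, m}`, then `S (m+1) = ∑_{i=1}^{m+1} Z i` is not uniformly distributed on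
`{0, …, m+1}`. -/
theorem exchangeable_bernoulli_sum_nonuniform
    {Ω : Type} [MeasurableSpace Ω] (μ : Measure Ω) [IsProbabilityMeasure μ]
    (m : ℕ) (Z : Fin (m + 1) → Ω → ℕ)
    (hmeas : ∀ i, Measurable (Z i))
    (hval : ∀ i ω, Z i ω = 0 ∨ Z i ω = 1)
    (hexch : ∀ σ : Equiv.Perm (Fin (m + 1)),
      μ.map (fun ω => fun i => Z (σ i) ω) = μ.map (fun ω => fun i => Z i ω))
    (hnonunif : ¬ (∀ k : ℕ, k ≤ m →
      μ {ω | (∑ i : Fin m, Z i.castSucc ω) = k} = ((m : ℝ≥0∞) + 1)⁻¹)) :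
    ¬ (∀ k : ℕ, k ≤ m + 1 →
      μ {ω | (∑ i : Fin (m + 1), Z i ω) = k} = ((m : ℝ≥0∞) + 2)⁻¹) :=
  exchangeable_bernoulli_sum_nonuniform_general μ m Z hmeas hval hexch hnonunif
end

section
/- Suppose p ≠ q, let h(x) := q(x) − p(x), and let ≺ be any strict total order on T such that h(x) > h(x') implies x ≺ x' (and h(x) < h(x') implies x' ≺ x). Define the cumulative functions p̃(x) := Σ_{y ≺ x} p(y) and q̃(x) := Σ_{y ≺ x} q(y). Then q̃(x) > p̃(x) for every x ∈ T that is not the ≺-least element of T. -/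
/-!
Put `h := q - p` and `s := {y | y ≺ x}`. Since `≺` orders `T` by decreasing `h` and `s` is an
initial segment, every value of `h` on `s` dominates every value of `h` off `s`, while `h` sums to
`0`. If `∑_{y ∈ s} h y ≤ 0`, then `h` cannot be negative anywhere on `s` (otherwise it would be
strictly negative on the nonempty complement, which contains `x`, and the two partial sums could
not add up to `0`); so `h` vanishes on `s`, is nonpositive off `s`, and hence vanishes everywhere,
i.e. `p = q`.
-/

open scoped ENNReal

section Dominating

variable {α : Type*} {f : α → ℝ} {s : Set α} {a b : α}

theorem nonneg_on_of_tsum_subtype_nonpos (hf : Summable f) (hsum : ∑' y, f y = 0)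
    (hdom : ∀ a ∈ s, ∀ b ∉ s, f b ≤ f a) (hb : b ∉ s) (hs : ∑' y : s, f y ≤ 0) :
    ∀ a ∈ s, 0 ≤ f a := by
  intro a ha
  by_contra! hfa
  have hcompl_neg : ∑' y : ↥sᶜ, f y < 0 := by
    have hlt : f (⟨b, hb⟩ : ↥sᶜ) < 0 := (hdom a ha b hb).trans_lt hfa
    simpa using (hf.subtype (· ∈ sᶜ)).tsum_lt_tsum (g := 0)
      (fun c : ↥sᶜ => (hdom a ha c c.2).trans hfa.le) hlt summable_zero
  linarith [(hf.subtype (· ∈ s)).tsum_add_tsum_compl (hf.subtype (· ∈ sᶜ))]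

theorem eq_zero_of_tsum_subtype_nonpos (hf : Summable f) (hsum : ∑' y, f y = 0)
    (hdom : ∀ a ∈ s, ∀ b ∉ s, f b ≤ f a) (ha : a ∈ s) (hb : b ∉ s)
    (hs : ∑' y : s, f y ≤ 0) : f = 0 := by
  have hnonneg := nonneg_on_of_tsum_subtype_nonpos hf hsum hdom hb hs
  have hzero_on : ∀ c ∈ s, f c = 0 := fun c hc =>
    (((hf.subtype (· ∈ s)).le_tsum ⟨c, hc⟩ fun d _ => hnonneg d d.2).trans hs).antisymm
      (hnonneg c hc)
  have hnonpos : ∀ c, f c ≤ 0 := fun c => by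
    by_cases hc : c ∈ s
    · exact (hzero_on c hc).le
    · exact (hdom a ha c hc).trans (hzero_on a ha).le
  funext c
  have := hf.neg.le_tsum c fun d _ => neg_nonneg.2 (hnonpos d)
  rw [tsum_neg, hsum] at this
  exact (hnonpos c).antisymm (by simpa using this)

end Dominating

namespace PMF

variable {α : Type*} (p q : PMF α)

theorem summable_toReal : Summable fun a => (p a).toReal :=
  ENNReal.summable_toReal (p.tsum_coe ▸ ENNReal.one_ne_top)

theorem tsum_toReal : ∑' a, (p a).toReal = 1 := by
  rw [← ENNReal.tsum_toReal_eq p.apply_ne_top, p.tsum_coe, ENNReal.toReal_one]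

theorem tsum_toReal_sub_toReal : ∑' a, ((q a).toReal - (p a).toReal) = 0 := by
  rw [q.summable_toReal.tsum_sub p.summable_toReal, q.tsum_toReal, p.tsum_toReal, sub_self]

theorem eq_of_toReal_sub_toReal_eq_zero (h : (fun a => (q a).toReal - (p a).toReal) = 0) :
    p = q :=
  PMF.ext fun a => ((ENNReal.toReal_eq_toReal_iff' (p.apply_ne_top a) (q.apply_ne_top a)).1
    (sub_eq_zero.1 (congrFun h a)).symm)

theorem tsum_subtype_ne_top (s : Set α) : ∑' a : s, p a ≠ ∞ :=
  ne_top_of_le_ne_top (p.tsum_coe ▸ ENNReal.one_ne_top)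
    (ENNReal.tsum_comp_le_tsum_of_injective Subtype.val_injective p)

theorem tsum_subtype_lt_of_toReal_sub_pos {s : Set α}
    (h : 0 < ∑' a : s, ((q a).toReal - (p a).toReal)) : ∑' a : s, p a < ∑' a : s, q a := by
  have hp : Summable fun a : s => (p a).toReal := p.summable_toReal.subtype _
  have hq : Summable fun a : s => (q a).toReal := q.summable_toReal.subtype _
  rwa [← ENNReal.toReal_lt_toReal (p.tsum_subtype_ne_top s) (q.tsum_subtype_ne_top s),
    ENNReal.tsum_toReal_eq fun a : s => p.apply_ne_top a,
    ENNReal.tsum_toReal_eq fun a : s => q.apply_ne_top a, ← sub_pos, ← hq.tsum_sub hp]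

end PMF

theorem cdf_q_gt_cdf_p_general
    {T : Type} (p q : PMF T) (hpq : p ≠ q)
    (r : T → T → Prop) (hr : IsStrictTotalOrder T r)
    (horder₂ : ∀ x x' : T,
      (q x).toReal - (p x).toReal < (q x').toReal - (p x').toReal → r x' x) :
    ∀ x : T, (∃ y : T, r y x) →
      (∑' y : {y : T // r y x}, p y.1) < ∑' y : {y : T // r y x}, q y.1 := by
  rintro x ⟨a, hax⟩
  let s : Set T := {y | r y x}
  have hdom : ∀ a ∈ s, ∀ b ∉ s,
      (q b).toReal - (p b).toReal ≤ (q a).toReal - (p a).toReal :=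
    fun a ha b hb => not_lt.1 fun hlt => hb (hr.trans _ _ _ (horder₂ a b hlt) ha)
  have hpos : 0 < ∑' y : s, ((q y).toReal - (p y).toReal) := by
    by_contra! hle
    exact hpq (p.eq_of_toReal_sub_toReal_eq_zero q <|
      eq_zero_of_tsum_subtype_nonpos (q.summable_toReal.sub p.summable_toReal)
        (p.tsum_toReal_sub_toReal q) hdom hax (hr.irrefl x) hle)
  exact p.tsum_subtype_lt_of_toReal_sub_pos q hpos

/-- **Lemma (the CDF of `q` strictly exceeds the CDF of `p`).** Suppose `p ≠ q`, let
`h x := q x − p x`, and let `≺` be any strict total order on `T` such that `h x > h x'`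
implies `x ≺ x'` (and `h x < h x'` implies `x' ≺ x`).  Writing `p̃ x = ∑_{y ≺ x} p y` and
`q̃ x = ∑_{y ≺ x} q y`, we have `q̃ x > p̃ x` for every `x` that is not the `≺`-least
element of `T`. -/
theorem cdf_q_gt_cdf_p
    {T : Type} [Countable T] (p q : PMF T) (hpq : p ≠ q)
    (r : T → T → Prop) (hr : IsStrictTotalOrder T r)
    (horder₁ : ∀ x x' : T,
      (q x).toReal - (p x).toReal > (q x').toReal - (p x').toReal → r x x')
    (horder₂ : ∀ x x' : T,
      (q x).toReal - (p x).toReal < (q x').toReal - (p x').toReal → r x' x) :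
    ∀ x : T, (∃ y : T, r y x) →
      (∑' y : {y : T // r y x}, p y.1) < ∑' y : {y : T // r y x}, q y.1 :=
  cdf_q_gt_cdf_p_general p q hpq r hr horder₂
end

section
/- Let p₀, p₁ and q be probability distributions on T, and let ⊏ be a strict total order on T such that q(x) − p₀(x) > q(x') − p₀(x') implies x ⊏ x' and q(x) − p₀(x) < q(x') − p₀(x') implies x' ⊏ x. Suppose further that whenever p₁(x) − p₀(x) > 0 and p₁(y) − p₀(y) ≤ 0 one has x ⊏ y. Then P(R_{p₀,q} = 0) ≥ P(R_{p₁,q} = 0), where for a distribution p the random variable R_{p,q} ∈ {0,1} is defined by independently sampling X ~ p and Y ~ q and setting R_{p,q} = 0 if Y ⊏ X, R_{p,q} = 1 if X ⊏ Y, and R_{p,q} equal to an independent fair coin flip if X = Y. -/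
open MeasureTheory ProbabilityTheory
open scoped ENNReal

noncomputable section

/-- A fair coin: the Bernoulli(1/2) distribution on `Bool`. -/
def fairCoin : Measure Bool := (PMF.bernoulli 2⁻¹ (by norm_num)).toMeasure

instance : IsProbabilityMeasure fairCoin := PMF.toMeasure.isProbabilityMeasure _

/-- `P(R_{p,q} = 0)` for the `m = 1` stochastic rank statistic: sample `X ~ p`, `Y ~ q`
and a fair coin `c`, all mutually independent (so the joint law is the product measure);
`R_{p,q} = 0` iff `Y ⊏ X`, or `X = Y` and the tie-breaking coin comes up heads. -/
def probR0 {T : Type} [MeasurableSpace T] (rlt : T → T → Prop) (p q : PMF T) : ℝ≥0∞ :=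
  ((p.toMeasure.prod q.toMeasure).prod fairCoin)
    {z : (T × T) × Bool | rlt z.1.2 z.1.1 ∨ (z.1.1 = z.1.2 ∧ z.2 = true)}

/-- `P(R_{p,q} = 0 | X ∈ B, Y ∈ C)`: the conditional probability of the event
`R_{p,q} = 0` given `X ∈ B` and `Y ∈ C`, in the setting of `probR0`. -/
def probR0cond {T : Type} [MeasurableSpace T] (rlt : T → T → Prop) (p q : PMF T)
    (B C : Set T) : ℝ≥0∞ :=
  (((p.toMeasure.prod q.toMeasure).prod fairCoin)[|{z : (T × T) × Bool |
      z.1.1 ∈ B ∧ z.1.2 ∈ C}])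
    {z : (T × T) × Bool | rlt z.1.2 z.1.1 ∨ (z.1.1 = z.1.2 ∧ z.2 = true)}

/-! Conditioning on `X = x` gives `P(R_{p,q} = 0) = ∑ₓ p x · g x` with
`g x = P(Y ⊏ x) + q x / 2`, which is `⊏`-monotone in `x`. Passing from `p₀` to `p₁` puts
mass only on points lying `⊏`-below every point that loses mass, so a value `c` of `g`
separates the two regions and `∑ₓ (p₁ x - p₀ x) g x ≤ c ∑ₓ (p₁ x - p₀ x) = 0`. -/

def probR0Given {T : Type} [MeasurableSpace T] (rlt : T → T → Prop) (q : PMF T) (x : T) :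
    ℝ≥0∞ :=
  (q.toMeasure.prod fairCoin) {z : T × Bool | rlt z.1 x ∨ (x = z.1 ∧ z.2 = true)}

theorem probR0_eq_sum {T : Type} [Fintype T] [MeasurableSpace T] [MeasurableSingletonClass T]
    (rlt : T → T → Prop) (p q : PMF T) :
    probR0 rlt p q = ∑ x, p x * probR0Given rlt q x := by
  rw [probR0, Measure.prod_apply .of_discrete,
    lintegral_prod _ (measurable_of_countable _).aemeasurable, lintegral_fintype]
  refine Finset.sum_congr rfl fun x _ => ?_
  rw [PMF.toMeasure_apply_singleton _ _ (measurableSet_singleton _), mul_comm, probR0Given,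
    Measure.prod_apply .of_discrete]
  rfl

theorem probR0Given_le_one {T : Type} [MeasurableSpace T] (rlt : T → T → Prop) (q : PMF T)
    (x : T) : probR0Given rlt q x ≤ 1 :=
  prob_le_one

theorem probR0Given_mono {T : Type} [MeasurableSpace T] {rlt : T → T → Prop} [IsTrans T rlt]
    (q : PMF T) {x x' : T} (h : rlt x x') : probR0Given rlt q x ≤ probR0Given rlt q x' := by
  refine measure_mono fun z hz => Or.inl ?_
  rcases hz with hlt | ⟨rfl, -⟩
  · exact _root_.trans hlt h
  · exact h

section MassMoving

variable {ι R : Type*} [Fintype ι] [Ring R] [LinearOrder R] [IsOrderedRing R]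
  {P₀ P₁ F : ι → R}

theorem sum_mul_le_sum_mul_of_separating (hsum : ∑ i, P₀ i = ∑ i, P₁ i) (c : R)
    (hup : ∀ i, P₀ i < P₁ i → F i ≤ c) (hdown : ∀ i, P₁ i ≤ P₀ i → c ≤ F i) :
    ∑ i, P₁ i * F i ≤ ∑ i, P₀ i * F i := by
  have hterm : ∀ i, (P₁ i - P₀ i) * F i ≤ (P₁ i - P₀ i) * c := fun i => by
    rcases lt_or_ge (P₀ i) (P₁ i) with h | h
    · exact mul_le_mul_of_nonneg_left (hup i h) (sub_nonneg.2 h.le)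
    · exact mul_le_mul_of_nonpos_left (hdown i h) (sub_nonpos.2 h)
  have hzero : ∑ i, (P₁ i - P₀ i) * c = 0 := by
    rw [← Finset.sum_mul, Finset.sum_sub_distrib, hsum, sub_self, zero_mul]
  have := (Finset.sum_le_sum fun i _ => hterm i).trans_eq hzero
  simp only [sub_mul, Finset.sum_sub_distrib, sub_nonpos] at this
  exact this

theorem sum_mul_le_sum_mul_of_mass_moves_down (hsum : ∑ i, P₀ i = ∑ i, P₁ i)
    (hmove : ∀ i j, P₀ i < P₁ i → P₁ j ≤ P₀ j → F i ≤ F j) :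
    ∑ i, P₁ i * F i ≤ ∑ i, P₀ i * F i := by
  classical
  set up := Finset.univ.filter fun i => P₀ i < P₁ i
  rcases up.eq_empty_or_nonempty with hempty | hne
  · have hle : ∀ i ∈ Finset.univ, P₁ i ≤ P₀ i := fun i _ =>
      not_lt.1 fun h => Finset.eq_empty_iff_forall_notMem.1 hempty i (by simpa [up] using h)
    have heq := (Finset.sum_eq_sum_iff_of_le hle).1 hsum.symm
    exact (Finset.sum_congr rfl fun i hi => by rw [heq i hi]).le
  · refine sum_mul_le_sum_mul_of_separating hsum (up.sup' hne F)
      (fun i hi => Finset.le_sup' F (by simpa [up] using hi)) fun j hj => ?_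
    exact Finset.sup'_le _ _ fun i hi => hmove i j (by simpa [up] using hi) hj

end MassMoving

theorem PMF.sum_mul_le_sum_mul_of_mass_moves_down {T : Type} [Fintype T] (p₀ p₁ : PMF T)
    {g : T → ℝ≥0∞} (hg : ∀ x, g x ≠ ∞) (hmove : ∀ x y, p₀ x < p₁ x → p₁ y ≤ p₀ y → g x ≤ g y) :
    ∑ x, p₁ x * g x ≤ ∑ x, p₀ x * g x := by
  have hfin : ∀ (p : PMF T) x, p x * g x ≠ ∞ := fun p x =>
    ENNReal.mul_ne_top (p.apply_ne_top x) (hg x)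
  have hsum : ∀ p : PMF T, ∑ x, (p x).toReal = 1 := fun p => by
    rw [← ENNReal.toReal_sum fun x _ => p.apply_ne_top x,
      ← tsum_fintype (L := .unconditional T), p.tsum_coe, ENNReal.toReal_one]
  rw [← ENNReal.toReal_le_toReal (ENNReal.sum_ne_top.2 fun x _ => hfin p₁ x)
    (ENNReal.sum_ne_top.2 fun x _ => hfin p₀ x), ENNReal.toReal_sum fun x _ => hfin p₁ x,
    ENNReal.toReal_sum fun x _ => hfin p₀ x]
  simp only [ENNReal.toReal_mul]
  refine _root_.sum_mul_le_sum_mul_of_mass_moves_down ((hsum p₀).trans (hsum p₁).symm)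
    fun x y hx hy => ENNReal.toReal_mono (hg y) (hmove x y ?_ ?_)
  · exact (ENNReal.toReal_lt_toReal (p₀.apply_ne_top x) (p₁.apply_ne_top x)).1 hx
  · exact (ENNReal.toReal_le_toReal (p₁.apply_ne_top y) (p₀.apply_ne_top y)).1 hy

theorem probR0_mass_move_general
    {T : Type} [Fintype T] [MeasurableSpace T] [MeasurableSingletonClass T]
    (rlt : T → T → Prop) (hr : IsStrictTotalOrder T rlt)
    (p₀ p₁ q : PMF T)
    (hmove : ∀ x y : T,
      (p₁ x).toReal - (p₀ x).toReal > 0 → (p₁ y).toReal - (p₀ y).toReal ≤ 0 → rlt x y) :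
    probR0 rlt p₁ q ≤ probR0 rlt p₀ q := by
  have hdown : ∀ x y, p₀ x < p₁ x → p₁ y ≤ p₀ y → rlt x y := fun x y hx hy =>
    hmove x y (sub_pos.2
      ((ENNReal.toReal_lt_toReal (p₀.apply_ne_top x) (p₁.apply_ne_top x)).2 hx))
      (sub_nonpos.2 (ENNReal.toReal_mono (p₀.apply_ne_top y) hy))
  rw [probR0_eq_sum, probR0_eq_sum]
  exact p₀.sum_mul_le_sum_mul_of_mass_moves_down p₁
    (fun x => ne_top_of_le_ne_top ENNReal.one_ne_top (probR0Given_le_one rlt q x))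
    fun x y hx hy => probR0Given_mono q (hdown x y hx hy)

/-- **Lemma (mass moving).** Let `p₀, p₁, q` be probability distributions on a finite set
`T` and `⊏` a strict total order on `T` such that `q x − p₀ x > q x' − p₀ x'` implies
`x ⊏ x'` and `q x − p₀ x < q x' − p₀ x'` implies `x' ⊏ x`.  Suppose further that whenever
`p₁ x − p₀ x > 0` and `p₁ y − p₀ y ≤ 0` one has `x ⊏ y`.  Then
`P(R_{p₀,q} = 0) ≥ P(R_{p₁,q} = 0)`. -/
theorem probR0_mass_move
    {T : Type} [Fintype T] [Nonempty T] [MeasurableSpace T] [MeasurableSingletonClass T]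
    (rlt : T → T → Prop) (hr : IsStrictTotalOrder T rlt)
    (p₀ p₁ q : PMF T)
    (horder₁ : ∀ x x' : T,
      (q x).toReal - (p₀ x).toReal > (q x').toReal - (p₀ x').toReal → rlt x x')
    (horder₂ : ∀ x x' : T,
      (q x).toReal - (p₀ x).toReal < (q x').toReal - (p₀ x').toReal → rlt x' x)
    (hmove : ∀ x y : T,
      (p₁ x).toReal - (p₀ x).toReal > 0 → (p₁ y).toReal - (p₀ y).toReal ≤ 0 → rlt x y) :
    probR0 rlt p₁ q ≤ probR0 rlt p₀ q :=
  probR0_mass_move_general rlt hr p₀ p₁ q hmove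

end
end

section
/- Let p and q be probability distributions on a finite set T, let h(x) := q(x) − p(x), and let ⊏ be a strict total order on T such that h(x) > h(x') implies x ⊏ x' and h(x) < h(x') implies x' ⊏ x. Then P(R_{p,q} = 0) ≥ 1/2 + (1/2)·(max_{x ∈ T} (q(x) − p(x)))². -/
open MeasureTheory ProbabilityTheory
open scoped ENNReal

noncomputable section

/-! Let `F_g(x) = ∑_{y ⊏ x} g y + g x / 2` be the mid-distribution function of `g`, so that
`P(R_{p,q} = 0) = ∑ₓ p x F_q(x)`. The tie weights of `(x, y)` and `(y, x)` add up to one, so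
`∑ f F_g + ∑ g F_f = (∑ f)(∑ g)`; with `h = q - p` this gives
`P(R_{p,q} = 0) = 1/2 + ∑ₓ q x F_h(x)`. The order lists `h` in decreasing order and `∑ h = 0`,
so every initial segment carries nonnegative `h`-mass and `F_h ≥ 0`. Keeping only the term at a
maximiser `x₀` of `h`, where `q x₀ ≥ h x₀ = max h ≥ 0` and `F_h(x₀) ≥ h x₀ / 2`, gives the bound. -/

open Finset

lemma PMF.sum_toReal_eq_one {T : Type*} [Fintype T] (p : PMF T) : ∑ x, (p x).toReal = 1 := by
  rw [← ENNReal.toReal_sum fun x _ => p.apply_ne_top x, ← tsum_fintype (L := .unconditional _),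
    p.tsum_coe, ENNReal.toReal_one]

lemma PMF.toMeasure_real_singleton {T : Type*} [MeasurableSpace T] [MeasurableSingletonClass T]
    (p : PMF T) (x : T) : p.toMeasure.real {x} = (p x).toReal := by
  rw [measureReal_def, p.toMeasure_apply_singleton x (measurableSet_singleton x)]

lemma fairCoin_real_singleton (c : Bool) : fairCoin.real {c} = 2⁻¹ := by
  rw [measureReal_def, fairCoin, PMF.toMeasure_apply_singleton _ _ (measurableSet_singleton c)]
  cases c <;> simp [PMF.bernoulli_apply, ENNReal.one_sub_inv_two]

lemma sup'_nonneg_of_sum_eq_zero {T : Type*} [Fintype T] [Nonempty T] {h : T → ℝ}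
    (h0 : ∑ x, h x = 0) : 0 ≤ univ.sup' univ_nonempty h := by
  obtain ⟨x, -, hx⟩ := exists_le_of_sum_le univ_nonempty (f := 0) (g := h) (by simp [h0])
  exact hx.trans (le_sup' h (mem_univ x))

section MidCdf

variable {T : Type*} [Fintype T] [LinearOrder T]

def midCdf (g : T → ℝ) (x : T) : ℝ := ∑ y with y < x, g y + g x / 2

lemma midCdf_eq_sum_mul_ite (g : T → ℝ) (x : T) :
    midCdf g x = ∑ y, g y * if y < x then 1 else if y = x then 2⁻¹ else 0 := by
  have hsplit (y : T) : (if y < x then 1 else if y = x then (2⁻¹ : ℝ) else 0) =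
      (if y < x then 1 else 0) + if y = x then 2⁻¹ else 0 := by
    split_ifs with h₁ h₂ <;> simp_all
  simp only [hsplit, mul_add, sum_add_distrib, mul_ite, mul_one, mul_zero, sum_ite_eq', sum_filter,
    mem_univ, if_true, midCdf, div_eq_mul_inv]

lemma sum_mul_midCdf_add_sum_mul_midCdf (f g : T → ℝ) :
    ∑ x, f x * midCdf g x + ∑ x, g x * midCdf f x = (∑ x, f x) * ∑ x, g x := by
  have hweight (x y : T) : ((if y < x then 1 else if y = x then 2⁻¹ else 0) +
      if x < y then 1 else if x = y then 2⁻¹ else 0 : ℝ) = 1 := by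
    rcases lt_trichotomy x y with hxy | rfl | hxy
    · simp [hxy, hxy.ne', hxy.not_gt]
    · norm_num
    · simp [hxy, hxy.ne', hxy.not_gt]
  rw [sum_mul_sum]
  simp only [midCdf_eq_sum_mul_ite, mul_sum]
  rw [sum_comm (f := fun x y => g x * (f y * _)), ← sum_add_distrib]
  refine sum_congr rfl fun x _ => ?_
  rw [← sum_add_distrib]
  refine sum_congr rfl fun y _ => ?_
  linear_combination f x * g y * hweight x y

lemma midCdf_sub (f g : T → ℝ) (x : T) : midCdf (f - g) x = midCdf f x - midCdf g x := by
  simp only [midCdf, Pi.sub_apply, sum_sub_distrib]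
  ring

lemma sum_mul_midCdf_self (f : T → ℝ) : ∑ x, f x * midCdf f x = (∑ x, f x) ^ 2 / 2 := by
  linarith [sum_mul_midCdf_add_sum_mul_midCdf f f]

/-- If the lower set contained a point of negative mass, its complement would lie above it. -/
lemma sum_nonneg_of_isLowerSet {h : T → ℝ} (hh : Antitone h) (h0 : ∑ x, h x = 0) {s : Finset T}
    (hs : IsLowerSet (s : Set T)) : 0 ≤ ∑ x ∈ s, h x := by
  by_contra! hneg
  obtain ⟨x, hxs, hx⟩ := exists_lt_of_sum_lt (hneg.trans_eq sum_const_zero.symm)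
  have hcompl : ∑ y ∈ sᶜ, h y ≤ 0 := by
    refine sum_nonpos fun y hy => (hh ?_).trans hx.le
    exact le_of_not_ge fun hyx => mem_compl.mp hy (hs hyx hxs)
  linarith [sum_add_sum_compl s h]

lemma sum_filter_le_eq_sum_filter_lt_add (g : T → ℝ) (x : T) :
    ∑ y with y ≤ x, g y = ∑ y with y < x, g y + g x := by
  have hinsert : filter (· ≤ x) univ = insert x (filter (· < x) univ) := by
    ext y
    simp [le_iff_lt_or_eq, or_comm]
  rw [hinsert, sum_insert (by simp), add_comm]

lemma sum_filter_lt_nonneg {h : T → ℝ} (hh : Antitone h) (h0 : ∑ x, h x = 0) (x : T) :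
    0 ≤ ∑ y with y < x, h y :=
  sum_nonneg_of_isLowerSet hh h0 (by rw [coe_filter_univ]; exact isLowerSet_Iio x)

lemma midCdf_nonneg {h : T → ℝ} (hh : Antitone h) (h0 : ∑ x, h x = 0) (x : T) :
    0 ≤ midCdf h x := by
  have hle : 0 ≤ ∑ y with y ≤ x, h y :=
    sum_nonneg_of_isLowerSet hh h0 (by rw [coe_filter_univ]; exact isLowerSet_Iic x)
  rw [sum_filter_le_eq_sum_filter_lt_add] at hle
  rw [midCdf]
  linarith [sum_filter_lt_nonneg hh h0 x]

lemma sq_le_two_mul_sum_mul_midCdf {g h : T → ℝ} (hg : 0 ≤ g) (hhg : h ≤ g) (hh : Antitone h)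
    (h0 : ∑ x, h x = 0) {x : T} (hx : 0 ≤ h x) : h x ^ 2 ≤ 2 * ∑ y, g y * midCdf h y := by
  have hmid : h x / 2 ≤ midCdf h x := by
    rw [midCdf]
    linarith [sum_filter_lt_nonneg hh h0 x]
  calc h x ^ 2 = 2 * (h x * (h x / 2)) := by ring
    _ ≤ 2 * (g x * midCdf h x) := by
      gcongr 2 * ?_
      exact mul_le_mul (hhg x) hmid (by linarith) (hg x)
    _ ≤ 2 * ∑ y, g y * midCdf h y := by
      gcongr
      exact single_le_sum (fun y _ => mul_nonneg (hg y) (midCdf_nonneg hh h0 y)) (mem_univ x)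

lemma half_add_half_sq_sup'_le_sum_mul_midCdf [Nonempty T] {p q : T → ℝ} (hp : 0 ≤ p)
    (hq : 0 ≤ q) (hp1 : ∑ x, p x = 1) (hq1 : ∑ x, q x = 1) (hpq : Antitone (q - p)) :
    1 / 2 + 1 / 2 * (univ.sup' univ_nonempty (q - p)) ^ 2 ≤ ∑ x, p x * midCdf q x := by
  have h0 : ∑ x, (q - p) x = 0 := by simp [sum_sub_distrib, hp1, hq1]
  have hsplit : ∑ x, p x * midCdf q x = 1 / 2 + ∑ x, q x * midCdf (q - p) x := by
    have hpq := sum_mul_midCdf_add_sum_mul_midCdf p q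
    simp only [midCdf_sub, mul_sub, sum_sub_distrib, sum_mul_midCdf_self, hp1, hq1] at hpq ⊢
    linarith
  obtain ⟨x, -, hx⟩ := exists_mem_eq_sup' univ_nonempty (q - p)
  have hbound := sq_le_two_mul_sum_mul_midCdf hq (fun y => by simpa using hp y) hpq h0
    (hx ▸ sup'_nonneg_of_sum_eq_zero h0)
  rw [hx, hsplit]
  linarith

end MidCdf

lemma probR0_toReal_eq_sum_mul_midCdf {T : Type} [Fintype T] [LinearOrder T] [MeasurableSpace T]
    [MeasurableSingletonClass T] (p q : PMF T) :
    (probR0 (· < ·) p q).toReal = ∑ x, (p x).toReal * midCdf (fun y => (q y).toReal) x := by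
  classical
  set ν := (p.toMeasure.prod q.toMeasure).prod fairCoin
  have hsingleton (x y : T) (c : Bool) :
      ν.real {((x, y), c)} = (p x).toReal * (q y).toReal * 2⁻¹ := by
    rw [← Set.singleton_prod_singleton, measureReal_prod_prod, ← Set.singleton_prod_singleton,
      measureReal_prod_prod, PMF.toMeasure_real_singleton, PMF.toMeasure_real_singleton,
      fairCoin_real_singleton]
  change ν.real _ = _
  rw [← Set.coe_toFinset {z : (T × T) × Bool | z.1.2 < z.1.1 ∨ (z.1.1 = z.1.2 ∧ z.2 = true)},
    ← sum_measureReal_singleton, Set.toFinset_ofPred, sum_filter, Fintype.sum_prod_type,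
    Fintype.sum_prod_type]
  refine sum_congr rfl fun x _ => ?_
  rw [midCdf_eq_sum_mul_ite, mul_sum]
  refine sum_congr rfl fun y _ => ?_
  rw [Fintype.sum_bool]
  rcases lt_trichotomy y x with hyx | rfl | hxy
  · simp [hsingleton, hyx]
    ring
  · simp [hsingleton]
    ring
  · simp [hxy.not_gt, hxy.ne, hxy.ne']

theorem probR0_ge_half_add_max_sq_general
    {T : Type} [Fintype T] [Nonempty T] [MeasurableSpace T] [MeasurableSingletonClass T]
    (rlt : T → T → Prop) (hr : IsStrictTotalOrder T rlt)
    (p q : PMF T)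
    (horder₂ : ∀ x x' : T,
      (q x).toReal - (p x).toReal < (q x').toReal - (p x').toReal → rlt x' x) :
    1 / 2 + 1 / 2 *
        (Finset.univ.sup' Finset.univ_nonempty
          (fun x : T => (q x).toReal - (p x).toReal)) ^ 2
      ≤ (probR0 rlt p q).toReal := by
  classical
  let : LinearOrder T := linearOrderOfSTO rlt
  have hanti : Antitone fun x => (q x).toReal - (p x).toReal :=
    antitone_iff_forall_lt.mpr fun x x' hxx' =>
      le_of_not_gt fun hlt => asymm_of rlt hxx' (horder₂ x x' hlt)
  rw [show rlt = (· < ·) from rfl, probR0_toReal_eq_sum_mul_midCdf]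
  exact half_add_half_sq_sup'_le_sum_mul_midCdf (fun x => ENNReal.toReal_nonneg)
    (fun x => ENNReal.toReal_nonneg) p.sum_toReal_eq_one q.sum_toReal_eq_one hanti

/-- **Proposition (lower bound via the maximal excess).** Let `p, q` be probability
distributions on a finite set `T`, `h x := q x − p x`, and `⊏` a strict total order on
`T` such that `h x > h x'` implies `x ⊏ x'` and `h x < h x'` implies `x' ⊏ x`.  Then
`P(R_{p,q} = 0) ≥ 1/2 + (1/2) (max_{x ∈ T} (q x − p x))²`. -/
theorem probR0_ge_half_add_max_sq
    {T : Type} [Fintype T] [Nonempty T] [MeasurableSpace T] [MeasurableSingletonClass T]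
    (rlt : T → T → Prop) (hr : IsStrictTotalOrder T rlt)
    (p q : PMF T)
    (horder₁ : ∀ x x' : T,
      (q x).toReal - (p x).toReal > (q x').toReal - (p x').toReal → rlt x x')
    (horder₂ : ∀ x x' : T,
      (q x).toReal - (p x).toReal < (q x').toReal - (p x').toReal → rlt x' x) :
    1 / 2 + 1 / 2 *
        (Finset.univ.sup' Finset.univ_nonempty
          (fun x : T => (q x).toReal - (p x).toReal)) ^ 2
      ≤ (probR0 rlt p q).toReal :=
  probR0_ge_half_add_max_sq_general rlt hr p q horder₂

end
end

section
/- Fix a strict total order ⊏ on a finite set T. For all probability distributions p, q on T and every δ > 0, there exist ε > 0 and a probability distribution p_ε on T that is ε-discrete with respect to q (i.e., |(q(a) − p_ε(a)) − (q(b) − p_ε(b))| ≥ ε for all distinct a, b ∈ T) such that for all subsets B, C ⊆ T with p(B) > 0, p_ε(B) > 0 and q(C) > 0, one has |P(R_{p,q} = 0 | X ∈ B, Y ∈ C) − P(R_{p_ε,q} = 0 | X_ε ∈ B, Y ∈ C)| < δ, where X ~ p, X_ε ~ p_ε, Y ~ q. -/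
open MeasureTheory ProbabilityTheory
open scoped ENNReal

noncomputable section

open Filter Topology Function

/-! Mix `p` with a small weight `t` of a law `w` for which `a ↦ q a - w a` is injective (such a
`w` is itself a mixture of the uniform law with a law of pairwise distinct masses). The gaps
`q - p_t = (q - p) + t (p - w)` are affine in `t` and never identically equal at two points, so
they are pairwise distinct for all small `t > 0`, and finitely many distinct reals are
`ε`-separated for some `ε > 0`. The joint law of `(X, Y, coin)` is affine in `t` too, so each
conditional probability is a quotient of affine functions of `t` whose denominator
`p(B) q(C)` is nonzero at `t = 0`; it is therefore continuous at `0`, and since there are only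
finitely many pairs `(B, C)`, all of them are `δ`-close for small `t`. -/

theorem eventually_add_mul_ne_zero {x y : ℝ} (h : x ≠ 0 ∨ y ≠ 0) :
    ∀ᶠ t in 𝓝[>] 0, x + t * y ≠ 0 := by
  rcases eq_or_ne x 0 with rfl | hx
  · filter_upwards [self_mem_nhdsWithin] with t (ht : 0 < t)
    simpa [ht.ne'] using h
  · have hcont : Tendsto (fun t : ℝ => x + t * y) (𝓝 0) (𝓝 x) := by
      have : Continuous fun t : ℝ => x + t * y := by fun_prop
      simpa using this.tendsto 0
    exact (hcont.eventually_ne hx).filter_mono nhdsWithin_le_nhds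

theorem eventually_injective_add_mul {ι : Type*} [Finite ι] {f g : ι → ℝ}
    (h : Injective fun i => (f i, g i)) :
    ∀ᶠ t in 𝓝[>] 0, Injective fun i => f i + t * g i := by
  have hpair : ∀ i j, ∀ᶠ t in 𝓝[>] (0 : ℝ), f i + t * g i = f j + t * g j → i = j := by
    intro i j
    rcases eq_or_ne i j with hij | hij
    · exact .of_forall fun _ _ => hij
    have hne : f i - f j ≠ 0 ∨ g i - g j ≠ 0 := by
      by_contra! hfg
      exact hij (h (Prod.ext (sub_eq_zero.1 hfg.1) (sub_eq_zero.1 hfg.2)))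
    filter_upwards [eventually_add_mul_ne_zero hne] with t ht heq
    exact absurd (by linear_combination heq) ht
  filter_upwards [eventually_all.2 fun i => eventually_all.2 (hpair i)] with t ht i j
  exact ht i j

theorem exists_pos_le_abs_sub_of_injective {ι : Type*} [Finite ι] {f : ι → ℝ}
    (hf : Injective f) : ∃ ε > 0, ∀ i j, i ≠ j → ε ≤ |f i - f j| := by
  have hle : ∀ᶠ ε in 𝓝 (0 : ℝ), ∀ i j, i ≠ j → ε ≤ |f i - f j| :=
    eventually_all.2 fun i => eventually_all.2 fun j => eventually_imp_distrib_left.2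
      fun hij => eventually_le_nhds (abs_pos.2 (sub_ne_zero.2 (hf.ne hij)))
  obtain ⟨ε, hε, hε0⟩ :=
    ((hle.filter_mono (nhdsWithin_le_nhds (s := Set.Ioi 0))).and self_mem_nhdsWithin).exists
  exact ⟨ε, hε0, hε⟩

theorem tendsto_mix_div {x y c d : ℝ} (hc : c ≠ 0) :
    Tendsto (fun t => ((1 - t) * x + t * y) / ((1 - t) * c + t * d)) (𝓝 0) (𝓝 (x / c)) := by
  have hcont : ContinuousAt (fun t : ℝ => ((1 - t) * x + t * y) / ((1 - t) * c + t * d)) 0 :=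
    ContinuousAt.div (by fun_prop) (by fun_prop) (by simpa using hc)
  simpa using hcont.tendsto

namespace PMF

variable {α : Type*}

def mix (p w : PMF α) (t : ℝ≥0∞) (ht : t ≤ 1) : PMF α :=
  ⟨fun a => (1 - t) * p a + t * w a, ENNReal.summable.hasSum_iff.2 <| by
    rw [ENNReal.tsum_add, ENNReal.tsum_mul_left, ENNReal.tsum_mul_left, p.tsum_coe, w.tsum_coe,
      mul_one, mul_one, tsub_add_cancel_of_le ht]⟩

section mix

variable (p w : PMF α) {t : ℝ≥0∞} (ht : t ≤ 1)

@[simp]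
theorem mix_apply (a : α) : p.mix w t ht a = (1 - t) * p a + t * w a := rfl

theorem toReal_mix_apply (a : α) :
    (p.mix w t ht a).toReal = (1 - t.toReal) * (p a).toReal + t.toReal * (w a).toReal := by
  have ht' : t ≠ ∞ := ne_top_of_le_ne_top ENNReal.one_ne_top ht
  rw [mix_apply, ENNReal.toReal_add (ENNReal.mul_ne_top (by simp) (p.apply_ne_top a))
      (ENNReal.mul_ne_top ht' (w.apply_ne_top a)), ENNReal.toReal_mul,
    ENNReal.toReal_mul, ENNReal.toReal_sub_of_le ht ENNReal.one_ne_top, ENNReal.toReal_one]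

theorem toMeasure_mix [MeasurableSpace α] :
    (p.mix w t ht).toMeasure = (1 - t) • p.toMeasure + t • w.toMeasure := by
  ext s hs
  simp only [Measure.add_apply, Measure.smul_apply, smul_eq_mul, toMeasure_apply _ hs,
    ← ENNReal.tsum_mul_left, ← ENNReal.tsum_add]
  congr 1 with a
  by_cases ha : a ∈ s <;> simp [ha]

end mix

theorem exists_injective_toReal [Fintype α] [Nonempty α] :
    ∃ u : PMF α, Injective fun a => (u a).toReal := by
  let e := Fintype.equivFin α
  let f : α → ℝ≥0∞ := fun a => ((e a + 1 : ℕ) : ℝ≥0∞)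
  have hf0 : ∑' a, f a ≠ 0 := by simp [f]
  have hf : ∑' a, f a ≠ ∞ := by simp [f, tsum_fintype]
  refine ⟨normalize f hf0 hf, fun a b hab => e.injective (Fin.ext ?_)⟩
  have hc : ((∑' a, f a)⁻¹).toReal ≠ 0 :=
    ENNReal.toReal_ne_zero.2 ⟨ENNReal.inv_ne_zero.2 hf, ENNReal.inv_ne_top.2 hf0⟩
  simp only [normalize_apply, ENNReal.toReal_mul] at hab
  simpa only [f, ENNReal.toReal_natCast, Nat.cast_inj, add_left_inj] using
    mul_right_cancel₀ hc hab

theorem eventually_injective_toReal_sub_mix [Finite α] (p q w : PMF α)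
    (h : Injective fun a => ((q a).toReal - (p a).toReal, (p a).toReal - (w a).toReal)) :
    ∀ᶠ t in 𝓝[>] (0 : ℝ), ∀ ht : ENNReal.ofReal t ≤ 1,
      Injective fun a => (q a).toReal - (p.mix w _ ht a).toReal := by
  filter_upwards [eventually_injective_add_mul h, self_mem_nhdsWithin] with t hinj ht0 ht
  convert hinj using 2 with a
  rw [toReal_mix_apply, ENNReal.toReal_ofReal (le_of_lt ht0)]
  ring

theorem exists_injective_toReal_sub [Fintype α] (q : PMF α) :
    ∃ w : PMF α, Injective fun a => (q a).toReal - (w a).toReal := by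
  have : Nonempty α := ⟨q.support_nonempty.some⟩
  obtain ⟨u, hu⟩ := exists_injective_toReal (α := α)
  have hpair : Injective fun a => ((q a).toReal - (uniformOfFintype α a).toReal,
      (uniformOfFintype α a).toReal - (u a).toReal) :=
    fun a b hab => hu (by simpa using congrArg Prod.snd hab)
  obtain ⟨t, ht1, hinj⟩ := (((eventually_lt_nhds one_pos).filter_mono nhdsWithin_le_nhds).and
      (eventually_injective_toReal_sub_mix _ q u hpair)).exists
  exact ⟨_, hinj (ENNReal.ofReal_le_one.2 ht1.le)⟩

end PMF

namespace ProbabilityTheory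

theorem toReal_cond_apply {Ω : Type*} [MeasurableSpace Ω] (μ : Measure Ω)
    {s : Set Ω} (hs : MeasurableSet s) (E : Set Ω) :
    (μ[|s] E).toReal = (μ (s ∩ E)).toReal / (μ s).toReal := by
  rw [cond_apply hs, ENNReal.toReal_mul, ENNReal.toReal_inv, inv_mul_eq_div]

theorem tendsto_toReal_cond_smul_add_smul {Ω : Type*} [MeasurableSpace Ω] (μ ν : Measure Ω)
    [IsFiniteMeasure μ] [IsFiniteMeasure ν] {s : Set Ω} (hs : MeasurableSet s) (hμs : μ s ≠ 0)
    (E : Set Ω) :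
    Tendsto (fun t : ℝ => (((1 - ENNReal.ofReal t) • μ + ENNReal.ofReal t • ν)[|s] E).toReal)
      (𝓝[>] 0) (𝓝 (μ[|s] E).toReal) := by
  have hmix : ∀ t : ℝ, 0 ≤ t → t ≤ 1 → ∀ S,
      (((1 - ENNReal.ofReal t) • μ + ENNReal.ofReal t • ν) S).toReal
        = (1 - t) * (μ S).toReal + t * (ν S).toReal := by
    intro t ht0 ht1 S
    rw [Measure.add_apply, Measure.smul_apply, Measure.smul_apply, smul_eq_mul, smul_eq_mul,
      ENNReal.toReal_add (by finiteness) (by finiteness), ENNReal.toReal_mul, ENNReal.toReal_mul,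
      ENNReal.toReal_sub_of_le (ENNReal.ofReal_le_one.2 ht1) ENNReal.one_ne_top,
      ENNReal.toReal_one, ENNReal.toReal_ofReal ht0]
  rw [toReal_cond_apply μ hs]
  refine Tendsto.congr' ?_ <| (tendsto_mix_div (y := (ν (s ∩ E)).toReal) (d := (ν s).toReal)
    (ENNReal.toReal_ne_zero.2 ⟨hμs, measure_ne_top μ s⟩)).mono_left nhdsWithin_le_nhds
  filter_upwards [self_mem_nhdsWithin,
    (eventually_lt_nhds one_pos).filter_mono nhdsWithin_le_nhds] with t ht0 ht1
  rw [toReal_cond_apply _ hs, hmix t (le_of_lt ht0) ht1.le, hmix t (le_of_lt ht0) ht1.le]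

end ProbabilityTheory

theorem eventually_abs_probR0cond_mix_sub_lt {T : Type} [Finite T] [MeasurableSpace T]
    [MeasurableSingletonClass T] (rlt : T → T → Prop) (p q w : PMF T) {B C : Set T}
    (hB : 0 < p.toMeasure B) (hC : 0 < q.toMeasure C) {δ : ℝ} (hδ : 0 < δ) :
    ∀ᶠ t in 𝓝[>] (0 : ℝ), ∀ ht : ENNReal.ofReal t ≤ 1,
      |(probR0cond rlt p q B C).toReal - (probR0cond rlt (p.mix w _ ht) q B C).toReal| < δ := by
  set F : Set ((T × T) × Bool) := {z | z.1.1 ∈ B ∧ z.1.2 ∈ C}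
  have hFpos : (p.toMeasure.prod q.toMeasure).prod fairCoin F ≠ 0 := by
    rw [show F = (B ×ˢ C) ×ˢ Set.univ by ext; simp [F], Measure.prod_prod, Measure.prod_prod,
      measure_univ, mul_one]
    exact mul_ne_zero hB.ne' hC.ne'
  filter_upwards [(tendsto_toReal_cond_smul_add_smul _
    ((w.toMeasure.prod q.toMeasure).prod fairCoin) (Set.toFinite F).measurableSet hFpos
    _).eventually (Metric.ball_mem_nhds _ hδ)] with t ht _
  rw [abs_sub_comm]
  simpa only [probR0cond, PMF.toMeasure_mix, Measure.add_prod, Measure.prod_smul_left,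
    Real.dist_eq, F] using ht

theorem probR0cond_approx_eps_discrete_general
    {T : Type} [Fintype T] [MeasurableSpace T] [MeasurableSingletonClass T]
    (rlt : T → T → Prop) :
    ∀ (p q : PMF T) (δ : ℝ), 0 < δ →
      ∃ ε : ℝ, 0 < ε ∧
        ∃ pe : PMF T,
          (∀ a b : T, a ≠ b →
            ε ≤ |((q a).toReal - (pe a).toReal) - ((q b).toReal - (pe b).toReal)|) ∧
          ∀ B C : Set T, 0 < p.toMeasure B → 0 < pe.toMeasure B → 0 < q.toMeasure C →
            |(probR0cond rlt p q B C).toReal - (probR0cond rlt pe q B C).toReal| < δ := by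
  intro p q δ hδ
  obtain ⟨w, hw⟩ := PMF.exists_injective_toReal_sub q
  have hpair : Injective fun a => ((q a).toReal - (p a).toReal, (p a).toReal - (w a).toReal) :=
    fun a b hab => hw (by simp only [Prod.ext_iff] at hab; linear_combination hab.1 + hab.2)
  have hclose : ∀ᶠ t in 𝓝[>] (0 : ℝ), ∀ B C : Set T, 0 < p.toMeasure B → 0 < q.toMeasure C →
      ∀ ht : ENNReal.ofReal t ≤ 1,
        |(probR0cond rlt p q B C).toReal - (probR0cond rlt (p.mix w _ ht) q B C).toReal| < δ :=
    eventually_all.2 fun B => eventually_all.2 fun C => eventually_imp_distrib_left.2 fun hB =>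
      eventually_imp_distrib_left.2 fun hC =>
        eventually_abs_probR0cond_mix_sub_lt rlt p q w hB hC hδ
  obtain ⟨t, ht1, hinj, hclose⟩ :=
    (((eventually_lt_nhds one_pos).filter_mono nhdsWithin_le_nhds).and
      ((p.eventually_injective_toReal_sub_mix q w hpair).and hclose)).exists
  have ht : ENNReal.ofReal t ≤ 1 := ENNReal.ofReal_le_one.2 ht1.le
  obtain ⟨ε, hε, hsep⟩ := exists_pos_le_abs_sub_of_injective (hinj ht)
  exact ⟨ε, hε, p.mix w _ ht, hsep, fun B C hB _ hC => hclose B C hB hC ht⟩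

/-- **Lemma (approximation by an `ε`-discrete distribution).** Fix a strict total order
`⊏` on a finite set `T`.  For all probability distributions `p, q` on `T` and every
`δ > 0`, there exist `ε > 0` and a probability distribution `p_ε` on `T` that is
`ε`-discrete with respect to `q` (i.e. `|(q a − p_ε a) − (q b − p_ε b)| ≥ ε` for all
distinct `a, b`), such that for all subsets `B, C ⊆ T` with `p(B) > 0`, `p_ε(B) > 0` and
`q(C) > 0`, one has
`|P(R_{p,q} = 0 | X ∈ B, Y ∈ C) − P(R_{p_ε,q} = 0 | X_ε ∈ B, Y ∈ C)| < δ`. -/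
theorem probR0cond_approx_eps_discrete
    {T : Type} [Fintype T] [Nonempty T] [MeasurableSpace T] [MeasurableSingletonClass T]
    (rlt : T → T → Prop) (hr : IsStrictTotalOrder T rlt) :
    ∀ (p q : PMF T) (δ : ℝ), 0 < δ →
      ∃ ε : ℝ, 0 < ε ∧
        ∃ pe : PMF T,
          (∀ a b : T, a ≠ b →
            ε ≤ |((q a).toReal - (pe a).toReal) - ((q b).toReal - (pe b).toReal)|) ∧
          ∀ B C : Set T, 0 < p.toMeasure B → 0 < pe.toMeasure B → 0 < q.toMeasure C →
            |(probR0cond rlt p q B C).toReal - (probR0cond rlt pe q B C).toReal| < δ :=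
  probR0cond_approx_eps_discrete_general rlt

end
end
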